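/- arXiv:1210.6380 — 5 statements merged into one kernel-verified Lean document; each statement's English description precedes it below -/
import Mathlib

section
/- Let G be a 2-connected finitely separable graph, let M be a matroid on the edge set of G whose circuits are exactly the edge sets of (finite) cycles of G, let X be a set of edges of G and Y := E(G) ∖ X. Then κ_M(X) = ∞ if and only if V[X] ∩ V[Y] is an infinite set; equivalently, any set F arising in the definition of κ_M(X) is infinite if and only if infinitely many vertices are incident both with an edge in X and with an edge in Y. -/
open scoped Matroid

variable {V : Type*} {α : Type*}

/-- The set of vertices incident with an edge in `X`. -/
def vertsOf (X : Set (Sym2 V)) : Set V := {v | ∃ e ∈ X, v ∈ e}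

/-- A graph is finitely separable if any two distinct vertices can be separated by deleting
finitely many edges. -/
def FinitelySeparable (G : SimpleGraph V) : Prop :=
  ∀ u v : V, u ≠ v → ∃ F : Set (Sym2 V), F.Finite ∧ ¬ (G.deleteEdges F).Reachable u v

/-- `C` is the edge set of a (finite) cycle of `G`. -/
def IsCycleEdgeSet (G : SimpleGraph V) (C : Set (Sym2 V)) : Prop :=
  ∃ (v : V) (w : G.Walk v v), w.IsCycle ∧ C = {e | e ∈ w.edges}

/-- `M` is the finite-cycle matroid of `G` : its ground set is the edge set of `G` and a set
of edges is independent iff it contains no edge set of a cycle of `G` (equivalently, the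
circuits of `M` are precisely the edge sets of cycles of `G`). -/
def IsFiniteCycleMatroid (G : SimpleGraph V) (M : Matroid (Sym2 V)) : Prop :=
  M.E = G.edgeSet ∧
    ∀ I, M.Indep I ↔ I ⊆ G.edgeSet ∧ ∀ C, IsCycleEdgeSet G C → ¬ C ⊆ I

/-- `F` arises in the definition of the connectivity function `κ_M(X)`: there are a base `B`
of `M|X` and a base `B'` of `M|(E \ X)` with `F ⊆ B ∪ B'` and `(B ∪ B') \ F` a base of `M`;
the connectivity `κ_M(X)` is then `F.encard`. -/
def ConnWitness (M : Matroid α) (X F : Set α) : Prop :=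
  ∃ B B', (M ↾ X).IsBase B ∧ (M ↾ (M.E \ X)).IsBase B' ∧
    F ⊆ B ∪ B' ∧ M.IsBase ((B ∪ B') \ F)

/-- The (vertex sets of the) connected components of the subgraph `(V[X], X)`. -/
def components (X : Set (Sym2 V)) : Set (Set V) :=
  {C | ∃ v ∈ vertsOf X, C = {w | (SimpleGraph.fromEdgeSet X).Reachable v w}}

/-- The subgraph `(V[X], X)` is connected (in particular nonempty). -/
def SubConnected (X : Set (Sym2 V)) : Prop :=
  (vertsOf X).Nonempty ∧
    ∀ u ∈ vertsOf X, ∀ w ∈ vertsOf X, (SimpleGraph.fromEdgeSet X).Reachable u w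

/-- The edges of `X` lying inside the vertex set `K`. -/
def edgesIn (X : Set (Sym2 V)) (K : Set V) : Set (Sym2 V) :=
  {e | e ∈ X ∧ ∀ v ∈ e, v ∈ K}

/-- `G` is 2-connected: connected, more than two vertices, and still connected after
deleting any one vertex. -/
def TwoConnected (G : SimpleGraph V) : Prop :=
  G.Connected ∧ 2 < (Set.univ : Set V).encard ∧
    ∀ v : V, (G.induce ({v}ᶜ : Set V)).Connected

/-- An `ℓ`-Tutte-separation of `G`: a partition `(X, Y)` of the edge set with at least `ℓ`
edges on each side and at most `ℓ` vertices incident both with an edge of `X` and with an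
edge of `Y`. -/
def TutteSep (G : SimpleGraph V) (ℓ : ℕ) (X Y : Set (Sym2 V)) : Prop :=
  X ∪ Y = G.edgeSet ∧ Disjoint X Y ∧ (ℓ : ℕ∞) ≤ X.encard ∧ (ℓ : ℕ∞) ≤ Y.encard ∧
    (vertsOf X ∩ vertsOf Y).encard ≤ (ℓ : ℕ∞)

/-- `G` is `k`-Tutte-connected: it has no `ℓ`-Tutte-separation for any `1 ≤ ℓ < k`. -/
def TutteConnected (G : SimpleGraph V) (k : ℕ) : Prop :=
  ∀ ℓ : ℕ, 1 ≤ ℓ → ℓ < k → ∀ X Y : Set (Sym2 V), ¬ TutteSep G ℓ X Y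

/-- An `ℓ`-separation of the matroid `M`: a partition `(X, Y)` of the ground set with at
least `ℓ` elements on each side and `κ_M(X) ≤ ℓ - 1`. -/
def MatSep (M : Matroid α) (ℓ : ℕ) (X Y : Set α) : Prop :=
  X ∪ Y = M.E ∧ Disjoint X Y ∧ (ℓ : ℕ∞) ≤ X.encard ∧ (ℓ : ℕ∞) ≤ Y.encard ∧
    ∀ F, ConnWitness M X F → F.encard + 1 ≤ (ℓ : ℕ∞)

/-- `M` is `k`-connected: it has no `ℓ`-separation for any `1 ≤ ℓ < k`. -/
def MatConnected (M : Matroid α) (k : ℕ) : Prop :=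
  ∀ ℓ : ℕ, 1 ≤ ℓ → ℓ < k → ∀ X Y : Set α, ¬ MatSep M ℓ X Y
namespace KappaAux


open SimpleGraph

variable {G : SimpleGraph V}

/-- Reachability within an edge set. -/
def EReach (A : Set (Sym2 V)) (u v : V) : Prop := (SimpleGraph.fromEdgeSet A).Reachable u v

/-- `A` contains no edge set of a cycle of `G`. -/
def NoCyc (G : SimpleGraph V) (A : Set (Sym2 V)) : Prop :=
  ∀ C, IsCycleEdgeSet G C → ¬ C ⊆ A

lemma EReach.refl (A : Set (Sym2 V)) (u : V) : EReach A u u := Reachable.refl u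

lemma EReach.symm {A : Set (Sym2 V)} {u v : V} (h : EReach A u v) : EReach A v u :=
  Reachable.symm h

lemma EReach.trans {A : Set (Sym2 V)} {u v w : V} (h : EReach A u v) (h' : EReach A v w) :
    EReach A u w := Reachable.trans h h'

lemma EReach.mono {A A' : Set (Sym2 V)} (hs : A ⊆ A') {u v : V} (h : EReach A u v) :
    EReach A' u v := Reachable.mono (fromEdgeSet_mono hs) h

lemma ereach_single {A : Set (Sym2 V)} {e : Sym2 V} {a b : V} (he : e ∈ A) (hab : e = s(a, b))
    (hne : a ≠ b) : EReach A a b :=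
  SimpleGraph.Adj.reachable ((fromEdgeSet_adj _).mpr ⟨hab ▸ he, hne⟩)

lemma ne_of_edge {e : Sym2 V} {a b : V} (he : e ∈ G.edgeSet) (hab : e = s(a, b)) : a ≠ b :=
  (G.mem_edgeSet.mp (hab ▸ he)).ne

lemma fromEdgeSet_sdiff_single (A : Set (Sym2 V)) (e : Sym2 V) :
    SimpleGraph.fromEdgeSet A \ SimpleGraph.fromEdgeSet {e} =
      SimpleGraph.fromEdgeSet (A \ {e}) := by
  ext v w
  simp only [sdiff_adj, fromEdgeSet_adj, Set.mem_diff, Set.mem_singleton_iff]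
  tauto

/-- transfer a `G`-cycle with edges in `A` to a cycle of `fromEdgeSet A`. -/
lemma cycle_transfer_to {C A : Set (Sym2 V)} (hA : A ⊆ G.edgeSet)
    (hC : IsCycleEdgeSet G C) (hCA : C ⊆ A) :
    ∃ (u : V) (p : (SimpleGraph.fromEdgeSet A).Walk u u), p.IsCycle ∧ ∀ e, e ∈ p.edges ↔ e ∈ C := by
  obtain ⟨v, w, hw, hCeq⟩ := hC
  have hsub : ∀ e ∈ w.edges, e ∈ (SimpleGraph.fromEdgeSet A).edgeSet := by
    intro e he
    rw [SimpleGraph.edgeSet_fromEdgeSet]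
    exact ⟨hCA (hCeq ▸ he), fun hd => (G.not_isDiag_of_mem_edgeSet (w.edges_subset_edgeSet he)) hd⟩
  refine ⟨v, w.transfer _ hsub, hw.transfer hsub, fun e => ?_⟩
  rw [SimpleGraph.Walk.edges_transfer, hCeq]
  exact Iff.rfl

/-- a cycle of `fromEdgeSet A` has edge set which is a `G`-cycle edge set inside `A`. -/
lemma cycle_transfer_from {A : Set (Sym2 V)} (hA : A ⊆ G.edgeSet) {u : V}
    (p : (SimpleGraph.fromEdgeSet A).Walk u u) (hp : p.IsCycle) :
    ∃ C, IsCycleEdgeSet G C ∧ C ⊆ A := by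
  have hsub : ∀ e ∈ p.edges, e ∈ G.edgeSet := by
    intro e he
    have := p.edges_subset_edgeSet he
    rw [SimpleGraph.edgeSet_fromEdgeSet] at this
    exact hA this.1
  refine ⟨{e | e ∈ p.edges}, ⟨u, p.transfer G hsub, hp.transfer hsub, by
    rw [SimpleGraph.Walk.edges_transfer]⟩, fun e he => ?_⟩
  have := p.edges_subset_edgeSet he
  rw [SimpleGraph.edgeSet_fromEdgeSet] at this
  exact this.1

/-- creating a cycle: an edge of `A` whose ends are joined avoiding it contradicts `NoCyc`. -/
lemma nocyc_no_reach {A : Set (Sym2 V)} (hA : A ⊆ G.edgeSet) (hnc : NoCyc G A)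
    {e : Sym2 V} {a b : V} (he : e ∈ A) (hab : e = s(a, b)) (hr : EReach (A \ {e}) a b) :
    False := by
  subst hab
  have hadj : (SimpleGraph.fromEdgeSet A).Adj a b :=
    (fromEdgeSet_adj _).mpr ⟨he, ne_of_edge (hA he) rfl⟩
  have hreach : ((SimpleGraph.fromEdgeSet A) \ SimpleGraph.fromEdgeSet {s(a, b)}).Reachable a b := by
    rw [fromEdgeSet_sdiff_single]
    exact hr
  obtain ⟨u, p, hp, -⟩ :=
    SimpleGraph.adj_and_reachable_delete_edges_iff_exists_cycle.mp ⟨hadj, hreach⟩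
  obtain ⟨C, hC1, hC2⟩ := cycle_transfer_from hA p hp
  exact hnc C hC1 hC2

/-- a cycle through `e = s(a,b)` inside `insert e A` yields reachability avoiding `e`. -/
lemma reach_of_cycle_insert {A : Set (Sym2 V)} (hA : A ⊆ G.edgeSet) {e : Sym2 V} {a b : V}
    (heE : e ∈ G.edgeSet) (hab : e = s(a, b)) {C : Set (Sym2 V)}
    (hC : IsCycleEdgeSet G C) (hCs : C ⊆ insert e A) (heC : e ∈ C) :
    EReach (A \ {e}) a b := by
  subst hab
  have hA' : insert (s(a, b)) A ⊆ G.edgeSet := Set.insert_subset heE hA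
  obtain ⟨u, p, hp, hiff⟩ := cycle_transfer_to hA' hC hCs
  have hkey := SimpleGraph.adj_and_reachable_delete_edges_iff_exists_cycle.mpr
    ⟨u, p, hp, (hiff _).mpr heC⟩
  have h2 := hkey.2
  rw [SimpleGraph.deleteEdges, fromEdgeSet_sdiff_single] at h2
  have hsub : (insert (s(a, b)) A) \ {s(a, b)} ⊆ A \ {s(a, b)} := by
    intro x hx
    exact ⟨(hx.1).resolve_left hx.2, hx.2⟩
  exact EReach.mono hsub h2

/-- maximality: a dependent insertion yields reachability within `A`. -/
lemma reach_of_dep {M : Matroid (Sym2 V)} (hM : IsFiniteCycleMatroid G M)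
    {A : Set (Sym2 V)} (hA : A ⊆ G.edgeSet) (hnc : NoCyc G A) {e : Sym2 V} {a b : V}
    (heE : e ∈ G.edgeSet) (hab : e = s(a, b)) (hdep : e ∈ A ∨ ¬ M.Indep (insert e A)) :
    EReach A a b := by
  rcases hdep with he | hni
  · exact ereach_single he hab (ne_of_edge heE hab)
  · have hni' : ¬ (insert e A ⊆ G.edgeSet ∧ ∀ C, IsCycleEdgeSet G C → ¬ C ⊆ insert e A) :=
      fun h => hni ((hM.2 _).mpr h)
    push_neg at hni'
    obtain ⟨C, hC, hCs⟩ := hni' (Set.insert_subset heE hA)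
    have heC : e ∈ C := by
      by_contra h
      exact hnc C hC (fun x hx => ((hCs hx).resolve_left (fun hxe => h (hxe ▸ hx))))
    exact EReach.mono Set.diff_subset (reach_of_cycle_insert hA heE hab hC hCs heC)

/-- walks propagate a predicate closed under adjacency. -/
lemma walk_closure {V' : Type*} {G' : SimpleGraph V'} {P : V' → Prop}
    (h : ∀ a c, G'.Adj a c → P a → P c) : ∀ {u v : V'} (_ : G'.Walk u v), P u → P v := by
  intro u v w
  induction w with
  | nil => exact id
  | cons ha p ih => exact fun hu => ih (h _ _ ha hu)

lemma mem_vertsOf {A : Set (Sym2 V)} {u c : V} (h : s(u, c) ∈ A) : u ∈ vertsOf A :=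
  ⟨s(u, c), h, by simp⟩

lemma vertsOf_mono {A B : Set (Sym2 V)} (h : A ⊆ B) : vertsOf A ⊆ vertsOf B := by
  rintro v ⟨e, he, hv⟩
  exact ⟨e, h he, hv⟩

lemma vertsOf_finite {F : Set (Sym2 V)} (hF : F.Finite) : (vertsOf F).Finite := by
  have hfin : ∀ e : Sym2 V, {v | v ∈ e}.Finite := by
    intro e
    refine Sym2.inductionOn e (fun a b => ?_)
    refine ((Set.finite_singleton b).insert a).subset ?_
    intro v hv
    rcases Sym2.mem_iff.mp hv with h | h <;> simp [h]
  refine (hF.biUnion (fun e _ => hfin e)).subset ?_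
  rintro v ⟨e, he, hv⟩
  exact Set.mem_biUnion he hv

lemma exists_edge_of_reach_ne {A : Set (Sym2 V)} {u v : V} (h : EReach A u v) (hne : u ≠ v) :
    ∃ c, c ≠ u ∧ s(u, c) ∈ A := by
  obtain ⟨w⟩ := h
  cases w with
  | nil => exact absurd rfl hne
  | @cons _ c _ ha p =>
    rw [fromEdgeSet_adj] at ha
    exact ⟨c, fun hcu => ha.2 hcu.symm, ha.1⟩

lemma mem_vertsOf_of_reach_ne {A : Set (Sym2 V)} {u v : V} (h : EReach A u v) (hne : u ≠ v) :
    u ∈ vertsOf A := by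
  obtain ⟨c, -, hc⟩ := exists_edge_of_reach_ne h hne
  exact mem_vertsOf hc

lemma sym2_rep (e : Sym2 V) : ∃ p : V × V, e = s(p.1, p.2) :=
  Sym2.inductionOn e fun a b => ⟨(a, b), rfl⟩


/-- Direction A auxiliary: if the boundary is finite then `F ∩ Bs` is finite. -/
lemma side_finite {G : SimpleGraph V} {Xs Xo Bs Bo F T₀ : Set (Sym2 V)}
    (hXsE : Xs ⊆ G.edgeSet)
    (hBs : Bs ⊆ Xs) (hBo : Bo ⊆ Xo)
    (hnc : NoCyc G Bs) (hT : T₀ = (Bs ∪ Bo) \ F)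
    (hRT : ∀ u v : V, EReach T₀ u v)
    (hSf : (vertsOf Xs ∩ vertsOf Xo).Finite) : (F ∩ Bs).Finite := by
  classical
  set S' := vertsOf Xs ∩ vertsOf Xo with hS'
  set R := F ∩ Bs with hRdef
  set pt : Sym2 V → V × V := fun e => Classical.choose (sym2_rep e) with hptdef
  have hpt : ∀ e : Sym2 V, e = s((pt e).1, (pt e).2) := fun e => Classical.choose_spec (sym2_rep e)
  set cls : V → Set V := fun a => {b | EReach (Bs \ F) a b} with hclsdef
  have cls_self : ∀ a, a ∈ cls a := fun a => EReach.refl _ a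
  have cls_mem : ∀ a b, b ∈ cls a → EReach (Bs \ F) a b := fun a b h => h
  have cls_eq : ∀ a b, b ∈ cls a → cls a = cls b := by
    intro a b hab
    ext c
    exact ⟨fun h => (EReach.symm hab).trans h, fun h => EReach.trans hab h⟩
  have hBsE : Bs ⊆ G.edgeSet := fun x hx => hXsE (hBs hx)
  have hBsF_sub : ∀ e ∈ R, Bs \ F ⊆ Bs \ {e} := by
    intro e he x hx
    exact ⟨hx.1, fun hxe => hx.2 (Set.mem_singleton_iff.mp hxe ▸ he.1)⟩
  -- injectivity of the pair map
  have hinj : Set.InjOn (fun e => (cls (pt e).1, cls (pt e).2)) R := by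
    intro e he e' he' heq
    by_contra hne
    simp only [Prod.mk.injEq] at heq
    have h1 : (pt e').1 ∈ cls (pt e).1 := heq.1.symm ▸ cls_self (pt e').1
    have h2 : (pt e').2 ∈ cls (pt e).2 := heq.2.symm ▸ cls_self (pt e').2
    have he'mem : e' ∈ Bs \ {e} := ⟨he'.2, fun h => hne (Set.mem_singleton_iff.mp h).symm⟩
    have hmid : EReach (Bs \ {e}) (pt e').1 (pt e').2 :=
      ereach_single he'mem (hpt e') (ne_of_edge (G := G) (hBsE he'.2) (hpt e'))
    have hchain : EReach (Bs \ {e}) (pt e).1 (pt e).2 :=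
      (((cls_mem _ _ h1).mono (hBsF_sub e he)).trans hmid).trans
        ((cls_mem _ _ h2).mono (hBsF_sub e he)).symm
    exact nocyc_no_reach hBsE hnc he.2 (hpt e) hchain
  -- endpoints set and class collection
  set E0 : Set V := {a | ∃ e ∈ R, a = (pt e).1 ∨ a = (pt e).2} with hE0def
  have hE0verts : ∀ a ∈ E0, a ∈ vertsOf Bs := by
    rintro a ⟨e, he, h | h⟩
    · subst h
      exact mem_vertsOf (hpt e ▸ he.2)
    · subst h
      have : e = s((pt e).2, (pt e).1) := (hpt e).trans (Sym2.eq_swap)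
      exact mem_vertsOf (this ▸ he.2)
  -- closure of S'-free classes along T₀
  have hclosure : ∀ a ∈ E0, (cls a ∩ S') = ∅ → ∀ c, EReach T₀ a c → c ∈ cls a := by
    intro a ha hdisj c hreach
    obtain ⟨w⟩ := hreach
    refine walk_closure (P := fun z => z ∈ cls a) ?_ w (cls_self a)
    intro p q hadj hp
    rw [fromEdgeSet_adj] at hadj
    have hedge : s(p, q) ∈ (Bs ∪ Bo) \ F := hT ▸ hadj.1
    rcases hedge.1 with hb | hb
    · exact EReach.trans hp (ereach_single ⟨hb, hedge.2⟩ rfl hadj.2)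
    · exfalso
      have hpXo : p ∈ vertsOf Xo := vertsOf_mono hBo (mem_vertsOf hb)
      have hpXs : p ∈ vertsOf Xs := by
        by_cases hpa : p = a
        · exact hpa ▸ vertsOf_mono hBs (hE0verts a ha)
        · have := exists_edge_of_reach_ne (EReach.symm (cls_mem _ _ hp)) hpa
          obtain ⟨d, -, hd⟩ := this
          exact vertsOf_mono (fun x hx => hBs hx.1) (mem_vertsOf hd)
      exact Set.eq_empty_iff_forall_notMem.mp hdisj p ⟨hp, hpXs, hpXo⟩
  -- finiteness of the class collection
  set TC : Set (Set V) := cls '' E0 with hTCdef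
  have hTCfin : TC.Finite := by
    have hfin1 : {c ∈ TC | (c ∩ S').Nonempty}.Finite := by
      refine ((hSf.image cls)).subset ?_
      rintro c ⟨⟨a, -, rfl⟩, w, hw⟩
      exact ⟨w, hw.2, (cls_eq a w hw.1).symm⟩
    have hfin2 : {c ∈ TC | ¬ (c ∩ S').Nonempty}.Finite := by
      refine Set.Subsingleton.finite ?_
      rintro c ⟨⟨a, ha, rfl⟩, hcs⟩ c' ⟨⟨a', ha', rfl⟩, hcs'⟩
      rw [Set.not_nonempty_iff_eq_empty] at hcs hcs'
      exact (cls_eq a a' (hclosure a ha hcs a' (hRT a a'))).symm ▸ rfl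
    refine (hfin1.union hfin2).subset ?_
    intro c hc
    by_cases h : (c ∩ S').Nonempty
    · exact Or.inl ⟨hc, h⟩
    · exact Or.inr ⟨hc, h⟩
  have himg : (fun e => (cls (pt e).1, cls (pt e).2)) '' R ⊆ TC ×ˢ TC := by
    rintro p ⟨e, he, rfl⟩
    exact ⟨⟨(pt e).1, ⟨e, he, Or.inl rfl⟩, rfl⟩, ⟨(pt e).2, ⟨e, he, Or.inr rfl⟩, rfl⟩⟩
  exact Set.Finite.of_finite_image ((hTCfin.prod hTCfin).subset himg) hinj


/-- Direction B: if some witness component `F` is finite, the boundary cannot be infinite. -/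
lemma boundary_not_infinite {G : SimpleGraph V} {X' B B' F T₀ : Set (Sym2 V)}
    (hXE : X' ⊆ G.edgeSet)
    (hBX : B ⊆ X') (hB'Y : B' ⊆ G.edgeSet \ X')
    (CHX : ∀ a b : V, s(a, b) ∈ X' → EReach B a b)
    (CHY : ∀ a b : V, s(a, b) ∈ G.edgeSet \ X' → EReach B' a b)
    (hT : T₀ = (B ∪ B') \ F)
    (hncT : NoCyc G T₀) (hTE : T₀ ⊆ G.edgeSet)
    (RT : ∀ u v : V, EReach T₀ u v)
    (hFfin : F.Finite)
    (h2c : ∀ v : V, (G.induce ({v}ᶜ : Set V)).Connected)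
    (hS : (vertsOf X' ∩ vertsOf (G.edgeSet \ X')).Infinite) : False := by
  classical
  have hdisj : ∀ e, e ∈ B → e ∈ B' → False := fun e he he' => (hB'Y he').2 (hBX he)
  -- a finite set U of vertices capturing F and tree-paths between endpoints of F-edges
  have hU : ∃ U : Set V, U.Finite ∧ vertsOf F ⊆ U ∧
      ∀ x, x ∉ U → ∀ f ∈ F, ∀ a b : V, f = s(a, b) → EReach (T₀ \ {e : Sym2 V | x ∈ e}) a b := by
    refine Set.Finite.induction_on F hFfin ⟨∅, Set.finite_empty, ?_, ?_⟩ ?_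
    · rintro v ⟨e, he, -⟩; exact absurd he (Set.notMem_empty e)
    · rintro x - f hf; exact absurd hf (Set.notMem_empty f)
    · rintro f F' - - ⟨U', hU'fin, hU'v, hU'⟩
      obtain ⟨⟨a0, b0⟩, hab0⟩ := sym2_rep f
      obtain ⟨w⟩ := RT a0 b0
      refine ⟨U' ∪ ({v | v ∈ f} ∪ {v | v ∈ w.support}), hU'fin.union
        ((vertsOf_finite (Set.finite_singleton f)).subset ?_ |>.union
          (w.support.finite_toSet)), ?_, ?_⟩
      · intro v hv; exact ⟨f, rfl, hv⟩
      · rintro v ⟨e, he, hv⟩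
        rcases Set.mem_insert_iff.mp he with rfl | he'
        · exact Or.inr (Or.inl hv)
        · exact Or.inl (hU'v ⟨e, he', hv⟩)
      · intro x hx f' hf' a b hab
        rcases Set.mem_insert_iff.mp hf' with rfl | hf'
        · -- f' = f : use the walk w, avoiding x
          have hxsup : x ∉ w.support := fun h => hx (Or.inr (Or.inr h))
          have htrans : ∀ e ∈ w.edges, e ∈ (SimpleGraph.fromEdgeSet
              (T₀ \ {e : Sym2 V | x ∈ e})).edgeSet := by
            intro e he
            have h1 := w.edges_subset_edgeSet he
            rw [SimpleGraph.edgeSet_fromEdgeSet] at h1 ⊢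
            refine ⟨⟨h1.1, ?_⟩, h1.2⟩
            intro hxe
            obtain ⟨y, rfl⟩ := Sym2.mem_iff_exists.mp hxe
            exact hxsup (w.fst_mem_support_of_mem_edges he)
          have hr0 : EReach (T₀ \ {e : Sym2 V | x ∈ e}) a0 b0 := ⟨w.transfer _ htrans⟩
          rcases Sym2.eq_iff.mp (hab0.symm.trans hab) with ⟨rfl, rfl⟩ | ⟨rfl, rfl⟩
          · exact hr0
          · exact hr0.symm
        · exact hU' x (fun h => hx (Or.inl h)) f' hf' a b hab
  obtain ⟨U, hUfin, hUv, hclubU⟩ := hU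
  -- pick a boundary vertex avoiding U
  obtain ⟨x, hxS, hxU⟩ := (hS.diff hUfin).nonempty
  set Ex : Set (Sym2 V) := {e : Sym2 V | x ∈ e} with hExdef
  have hclub : ∀ f ∈ F, ∀ a b : V, f = s(a, b) → EReach (T₀ \ Ex) a b :=
    fun f hf a b hab => hclubU x hxU f hf a b hab
  have hxF : x ∉ vertsOf F := fun h => hxU (hUv h)
  -- special edges at x
  have hBedge : ∃ n, n ≠ x ∧ s(x, n) ∈ B \ F := by
    obtain ⟨e, heX, hxe⟩ := hxS.1
    obtain ⟨z, rfl⟩ := Sym2.mem_iff_exists.mp hxe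
    have hne : x ≠ z := ne_of_edge (G := G) (hXE heX) rfl
    obtain ⟨n, hnx, hnB⟩ := exists_edge_of_reach_ne (CHX x z heX) hne
    exact ⟨n, hnx, hnB, fun hF1 => hxF (mem_vertsOf hF1)⟩
  have hB'edge : ∃ n, n ≠ x ∧ s(x, n) ∈ B' \ F := by
    obtain ⟨e, heY, hxe⟩ := hxS.2
    obtain ⟨z, rfl⟩ := Sym2.mem_iff_exists.mp hxe
    have hne : x ≠ z := ne_of_edge (G := G) heY.1 rfl
    obtain ⟨n, hnx, hnB⟩ := exists_edge_of_reach_ne (CHY x z heY) hne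
    exact ⟨n, hnx, hnB, fun hF1 => hxF (mem_vertsOf hF1)⟩
  obtain ⟨n₀, hn₀x, hn₀B⟩ := hBedge
  obtain ⟨n₀', hn₀'x, hn₀'B⟩ := hB'edge
  set AX : Set V := {w | ∃ n, n ≠ x ∧ s(x, n) ∈ B \ F ∧ EReach (T₀ \ Ex) n w} with hAXdef
  set AX' : Set V := {w | ∃ n, n ≠ x ∧ s(x, n) ∈ B' \ F ∧ EReach (T₀ \ Ex) n w} with hAX'def
  have hBFsubT : B \ F ⊆ T₀ := by
    intro e he; rw [hT]; exact ⟨Or.inl he.1, he.2⟩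
  have hB'FsubT : B' \ F ⊆ T₀ := by
    intro e he; rw [hT]; exact ⟨Or.inr he.1, he.2⟩
  have hXne : ∀ w ∈ AX, w ≠ x := by
    rintro w ⟨n, hnx, -, hr⟩ rfl
    obtain ⟨e, ⟨-, hEx⟩, hxe⟩ := mem_vertsOf_of_reach_ne hr.symm (Ne.symm hnx)
    exact hEx hxe
  have hX'ne : ∀ w ∈ AX', w ≠ x := by
    rintro w ⟨n, hnx, -, hr⟩ rfl
    obtain ⟨e, ⟨-, hEx⟩, hxe⟩ := mem_vertsOf_of_reach_ne hr.symm (Ne.symm hnx)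
    exact hEx hxe
  -- the two sides are disjoint (else a cycle in T₀ through x)
  have hAXdisj : ∀ w, w ∈ AX → w ∈ AX' → False := by
    rintro w ⟨n, hnx, hnB, hn⟩ ⟨n', hn'x, hn'B', hn'⟩
    have hnn' : n ≠ n' := by
      rintro rfl
      exact hdisj _ hnB.1 hn'B'.1
    have heT : s(x, n) ∈ T₀ := hBFsubT hnB
    have hstep : EReach (T₀ \ {s(x, n)}) x n' := by
      refine ereach_single (e := s(x, n')) ⟨hB'FsubT hn'B', ?_⟩ rfl (Ne.symm hn'x)
      intro hmem
      rcases Sym2.eq_iff.mp (Set.mem_singleton_iff.mp hmem) with ⟨-, h⟩ | ⟨hh, -⟩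
      · exact hnn' h.symm
      · exact hnx hh.symm
    have hsub2 : T₀ \ Ex ⊆ T₀ \ {s(x, n)} := by
      intro z hz
      exact ⟨hz.1, fun hze => hz.2 (Set.mem_singleton_iff.mp hze ▸ (by simp : x ∈ s(x, n)))⟩
    have hchain : EReach (T₀ \ {s(x, n)}) x n :=
      hstep.trans ((hn'.trans hn.symm).mono hsub2)
    exact nocyc_no_reach hTE hncT heT rfl hchain
  -- walks avoiding x inside B ∪ B' yield reach'
  have hmini : ∀ (C : Set (Sym2 V)), C ⊆ B ∪ B' → ∀ {a b : V}
      (w : (SimpleGraph.fromEdgeSet C).Walk a b), (∀ v ∈ w.support, v ≠ x) →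
      EReach (T₀ \ Ex) a b := by
    intro C hC a b w
    induction w with
    | nil => exact fun _ => EReach.refl _ _
    | @cons a c b ha p ih =>
      intro hsup
      have hax : a ≠ x := hsup a (by simp)
      have hcx : c ≠ x := hsup c (by simp)
      have hae := (SimpleGraph.fromEdgeSet_adj _).mp ha
      have hstep : EReach (T₀ \ Ex) a c := by
        by_cases hF1 : s(a, c) ∈ F
        · exact hclub _ hF1 a c rfl
        · refine ereach_single (e := s(a, c)) ⟨?_, ?_⟩ rfl hae.2
          · rw [hT]; exact ⟨hC hae.1, hF1⟩
          · intro hxe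
            rcases Sym2.mem_iff.mp hxe with h | h
            · exact hax h.symm
            · exact hcx h.symm
      exact hstep.trans (ih (fun v hv => hsup v (by simp [hv])))
  -- reaching x through B puts you in AX
  have hhitB : ∀ {a t : V} (_ : (SimpleGraph.fromEdgeSet B).Walk a t), t = x → a ≠ x → a ∈ AX := by
    intro a t w
    induction w with
    | nil => exact fun ht hax => absurd ht hax
    | @cons a c _ ha p ih =>
      intro htx hax
      have hae := (SimpleGraph.fromEdgeSet_adj _).mp ha
      by_cases hcx : c = x
      · have hBx : s(x, a) ∈ B := by rw [Sym2.eq_swap, ← hcx]; exact hae.1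
        exact ⟨a, hax, ⟨hBx, fun hF1 => hxF (mem_vertsOf hF1)⟩, EReach.refl _ _⟩
      · obtain ⟨n, hnx, hnBF, hr⟩ := ih htx hcx
        have hstep : EReach (T₀ \ Ex) a c := by
          by_cases hF1 : s(a, c) ∈ F
          · exact hclub _ hF1 a c rfl
          · refine ereach_single (e := s(a, c)) ⟨hBFsubT ⟨hae.1, hF1⟩, ?_⟩ rfl hae.2
            intro hxe
            rcases Sym2.mem_iff.mp hxe with h | h
            · exact hax h.symm
            · exact hcx h.symm
        exact ⟨n, hnx, hnBF, hr.trans hstep.symm⟩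
  have hhitB' : ∀ {a t : V} (_ : (SimpleGraph.fromEdgeSet B').Walk a t), t = x → a ≠ x → a ∈ AX' := by
    intro a t w
    induction w with
    | nil => exact fun ht hax => absurd ht hax
    | @cons a c _ ha p ih =>
      intro htx hax
      have hae := (SimpleGraph.fromEdgeSet_adj _).mp ha
      by_cases hcx : c = x
      · have hBx : s(x, a) ∈ B' := by rw [Sym2.eq_swap, ← hcx]; exact hae.1
        exact ⟨a, hax, ⟨hBx, fun hF1 => hxF (mem_vertsOf hF1)⟩, EReach.refl _ _⟩
      · obtain ⟨n, hnx, hnBF, hr⟩ := ih htx hcx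
        have hstep : EReach (T₀ \ Ex) a c := by
          by_cases hF1 : s(a, c) ∈ F
          · exact hclub _ hF1 a c rfl
          · refine ereach_single (e := s(a, c)) ⟨hB'FsubT ⟨hae.1, hF1⟩, ?_⟩ rfl hae.2
            intro hxe
            rcases Sym2.mem_iff.mp hxe with h | h
            · exact hax h.symm
            · exact hcx h.symm
        exact ⟨n, hnx, hnBF, hr.trans hstep.symm⟩
  -- B-walks preserve AX
  have hliftB : ∀ {a b : V} (w : (SimpleGraph.fromEdgeSet B).Walk a b),
      a ∈ AX → b ≠ x → b ∈ AX := by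
    intro a b w ha hb
    by_cases hxw : x ∈ w.support
    · exact hhitB (w.dropUntil x hxw).reverse rfl hb
    · obtain ⟨n, hnx, hnBF, hr⟩ := ha
      exact ⟨n, hnx, hnBF, hr.trans (hmini B Set.subset_union_left w
        (fun v hv hvx => hxw (hvx ▸ hv)))⟩
  have hliftB' : ∀ {a b : V} (w : (SimpleGraph.fromEdgeSet B').Walk a b),
      a ∈ AX → b ≠ x → b ∈ AX := by
    intro a b w ha hb
    by_cases hxw : x ∈ w.support
    · exact absurd (hhitB' (w.takeUntil x hxw) rfl (hXne a ha)) (fun h => hAXdisj a ha h)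
    · obtain ⟨n, hnx, hnBF, hr⟩ := ha
      exact ⟨n, hnx, hnBF, hr.trans (hmini B' Set.subset_union_right w
        (fun v hv hvx => hxw (hvx ▸ hv)))⟩
  -- one step of a G-walk avoiding x
  have hstepG : ∀ a b : V, a ≠ x → b ≠ x → G.Adj a b → a ∈ AX → b ∈ AX := by
    intro a b hax hbx hadj ha
    by_cases heX : s(a, b) ∈ X'
    · obtain ⟨w⟩ := CHX a b heX
      exact hliftB w ha hbx
    · obtain ⟨w⟩ := CHY a b ⟨G.mem_edgeSet.mpr hadj, heX⟩
      exact hliftB' w ha hbx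
  -- conclude using 2-connectivity
  have hmem₀ : n₀ ∈ ({x}ᶜ : Set V) := by simpa using hn₀x
  have hmem₀' : n₀' ∈ ({x}ᶜ : Set V) := by simpa using hn₀'x
  obtain ⟨w⟩ := (h2c x).preconnected ⟨n₀, hmem₀⟩ ⟨n₀', hmem₀'⟩
  have hfin : n₀' ∈ AX := by
    refine walk_closure (P := fun p : ({x}ᶜ : Set V) => (p : V) ∈ AX) ?_ w
      ⟨n₀, hn₀x, hn₀B, EReach.refl _ _⟩
    intro p q hpq hp
    exact hstepG p q (Set.mem_compl_singleton_iff.mp p.2) (Set.mem_compl_singleton_iff.mp q.2) hpq hp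
  exact hAXdisj n₀' hfin ⟨n₀', hn₀'x, hn₀'B, EReach.refl _ _⟩

end KappaAux

/-- In a 2-connected finitely separable graph `G` with finite-cycle matroid
`M`, for `X ⊆ E(G)` and `Y = E(G) \ X`, we have `κ_M(X) = ∞` iff `V[X] ∩ V[Y]` is infinite:
every set `F` arising in the definition of `κ_M(X)` is infinite iff infinitely many vertices
are incident both with an edge in `X` and with an edge in `Y`. -/
theorem kappa_infinite_iff {V : Type*} (G : SimpleGraph V) (h2 : TwoConnected G)
    (hfs : FinitelySeparable G) (M : Matroid (Sym2 V)) (hM : IsFiniteCycleMatroid G M)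
    (X Y : Set (Sym2 V)) (hX : X ⊆ G.edgeSet) (hY : Y = G.edgeSet \ X) :
    ∀ F, ConnWitness M X F → (F.Infinite ↔ (vertsOf X ∩ vertsOf Y).Infinite) := by
  classical
  open KappaAux in
  intro F hCW
  obtain ⟨B, B', hBb, hB'b, hFsub, hTb⟩ := hCW
  obtain ⟨hME, hMI⟩ := hM
  set T₀ : Set (Sym2 V) := (B ∪ B') \ F with hT₀def
  -- independence facts
  have hBi : M.Indep B ∧ B ⊆ X := Matroid.restrict_indep_iff.mp hBb.indep
  have hB'i : M.Indep B' ∧ B' ⊆ M.E \ X := Matroid.restrict_indep_iff.mp hB'b.indep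
  have hTi : M.Indep T₀ := hTb.indep
  have hYeq : M.E \ X = G.edgeSet \ X := by rw [hME]
  have hB'Y : B' ⊆ G.edgeSet \ X := hYeq ▸ hB'i.2
  have hncB : NoCyc G B := ((hMI B).mp hBi.1).2
  have hncB' : NoCyc G B' := ((hMI B').mp hB'i.1).2
  have hncT : NoCyc G T₀ := ((hMI T₀).mp hTi).2
  have hTE : T₀ ⊆ G.edgeSet := ((hMI T₀).mp hTi).1
  -- maximality-derived reachability
  have CHX : ∀ a b : V, s(a, b) ∈ X → EReach B a b := by
    intro a b hab
    refine reach_of_dep ⟨hME, hMI⟩ (fun e he => hX (hBi.2 he)) hncB (hX hab) rfl ?_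
    by_cases heB : s(a, b) ∈ B
    · exact Or.inl heB
    · refine Or.inr (fun hMIind => ?_)
      have hdep := hBb.insert_dep (e := s(a, b)) ⟨hab, heB⟩
      exact hdep.not_indep (Matroid.restrict_indep_iff.mpr
        ⟨hMIind, Set.insert_subset hab hBi.2⟩)
  have CHY : ∀ a b : V, s(a, b) ∈ G.edgeSet \ X → EReach B' a b := by
    intro a b hab
    refine reach_of_dep ⟨hME, hMI⟩ (fun e he => (hB'Y he).1) hncB' hab.1 rfl ?_
    by_cases heB : s(a, b) ∈ B'
    · exact Or.inl heB
    · refine Or.inr (fun hMIind => ?_)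
      have hdep := hB'b.insert_dep (e := s(a, b)) ⟨hYeq.symm ▸ hab, heB⟩
      exact hdep.not_indep (Matroid.restrict_indep_iff.mpr
        ⟨hMIind, Set.insert_subset (hYeq.symm ▸ hab) hB'i.2⟩)
  have CHT : ∀ a b : V, G.Adj a b → EReach T₀ a b := by
    intro a b hadj
    refine reach_of_dep ⟨hME, hMI⟩ hTE hncT (G.mem_edgeSet.mpr hadj) rfl ?_
    by_cases heT : s(a, b) ∈ T₀
    · exact Or.inl heT
    · exact Or.inr (hTb.insert_dep ⟨by rw [hME]; exact G.mem_edgeSet.mpr hadj, heT⟩).not_indep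
  have RT : ∀ u v : V, EReach T₀ u v := by
    intro u v
    obtain ⟨w⟩ := h2.1.preconnected u v
    exact walk_closure (P := fun z => EReach T₀ u z)
      (fun a c hac h => h.trans (CHT a c hac)) w (EReach.refl _ _)
  constructor
  · -- F infinite → boundary infinite
    intro hFinf
    by_contra hSinf
    rw [Set.not_infinite] at hSinf
    have hSf : (vertsOf X ∩ vertsOf (G.edgeSet \ X)).Finite := by rwa [hY] at hSinf
    have hfin1 : (F ∩ B).Finite :=
      side_finite (G := G) hX hBi.2 hB'Y hncB hT₀def RT (by rwa [hY] at hSinf)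
    have hfin2 : (F ∩ B').Finite := by
      refine side_finite (G := G) (fun e he => he.1) hB'Y hBi.2 hncB' ?_ RT ?_
      · rw [hT₀def, Set.union_comm]
      · rwa [Set.inter_comm, hY] at hSinf
    have : F ⊆ (F ∩ B) ∪ (F ∩ B') := by
      intro e he
      rcases hFsub he with h | h
      · exact Or.inl ⟨he, h⟩
      · exact Or.inr ⟨he, h⟩
    exact hFinf ((hfin1.union hfin2).subset this)
  · -- boundary infinite → F infinite
    intro hSinf
    by_contra hFinf
    rw [Set.not_infinite] at hFinf
    exact boundary_not_infinite hX hBi.2 hB'Y CHX CHY hT₀def hncT hTE RT hFinf h2.2.2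
      (by rwa [hY] at hSinf)
end

section
/- Let G be a finitely separable graph, and let 𝓓 be an infinite set of pairwise edge-disjoint finite cycles of G. Then there exist an infinite subset 𝓓' of 𝓓 and a vertex v of G such that any two distinct cycles in 𝓓' have no common vertex other than possibly v. -/
open scoped Matroid

variable {V : Type*} {α : Type*}

private lemma mem_support_of_exists_edge {V : Type*} {G : SimpleGraph V} {x y u : V}
    {p : G.Walk x y} (h : ∃ e ∈ p.edges, u ∈ e) : u ∈ p.support := by
  obtain ⟨e, he, hu⟩ := h
  induction e with
  | h a b =>
    rcases Sym2.mem_iff.1 hu with rfl | rfl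
    · exact p.fst_mem_support_of_mem_edges he
    · exact p.snd_mem_support_of_mem_edges he

private lemma vertsOf_finite_of_cycle {V : Type*} {G : SimpleGraph V} {C : Set (Sym2 V)}
    (h : IsCycleEdgeSet G C) : (vertsOf C).Finite := by
  obtain ⟨x, p, hp, rfl⟩ := h
  exact p.support.finite_toSet.subset fun u hu => mem_support_of_exists_edge hu

/-- Only finitely many pairwise edge-disjoint cycles contain two fixed distinct vertices. -/
private lemma pair_finite {V : Type*} {G : SimpleGraph V} (hfs : FinitelySeparable G)
    {𝓓 : Set (Set (Sym2 V))} (hcyc : ∀ C ∈ 𝓓, IsCycleEdgeSet G C)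
    (hdisj : 𝓓.Pairwise Disjoint) {u w : V} (huw : u ≠ w) :
    {C | C ∈ 𝓓 ∧ u ∈ vertsOf C ∧ w ∈ vertsOf C}.Finite := by
  classical
  obtain ⟨F, hFfin, hnr⟩ := hfs u w huw
  have key : ∀ C, C ∈ 𝓓 → u ∈ vertsOf C → w ∈ vertsOf C → ∃ e ∈ F, e ∈ C := by
    intro C hC𝓓 hu hw
    by_contra h
    push_neg at h
    obtain ⟨x, p, hp, rfl⟩ := hcyc C hC𝓓
    have hedges : ∀ e ∈ p.edges, e ∈ (G.deleteEdges F).edgeSet := by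
      intro e he
      rw [SimpleGraph.edgeSet_deleteEdges]
      exact ⟨p.edges_subset_edgeSet he, fun heF => h e heF he⟩
    set p' := p.transfer (G.deleteEdges F) hedges with hp'
    have hsupp : p'.support = p.support := p.support_transfer hedges
    have hu' : u ∈ p'.support := by
      rw [hsupp]; exact mem_support_of_exists_edge hu
    have hw' : w ∈ p'.support := by
      rw [hsupp]; exact mem_support_of_exists_edge hw
    exact hnr ⟨((p'.takeUntil u hu').reverse.append (p'.takeUntil w hw'))⟩
  have hsub : {C | C ∈ 𝓓 ∧ u ∈ vertsOf C ∧ w ∈ vertsOf C} ⊆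
      ⋃ e ∈ F, {C | C ∈ 𝓓 ∧ e ∈ C} := by
    rintro C ⟨hC, hu, hw⟩
    obtain ⟨e, heF, heC⟩ := key C hC hu hw
    exact Set.mem_biUnion heF ⟨hC, heC⟩
  refine (hFfin.biUnion fun e _ => ?_).subset hsub
  refine Set.Subsingleton.finite ?_
  rintro C₁ ⟨h1, he1⟩ C₂ ⟨h2, he2⟩
  by_contra hne
  exact Set.disjoint_left.1 (hdisj h1 h2 hne) he1 he2

/-- Greedy extraction of an infinite subfamily meeting pairwise only possibly in `v`. -/
private lemma extract_aux {V : Type*} {𝓔 : Set (Set (Sym2 V))} (hinf : 𝓔.Infinite)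
    (hverts : ∀ C ∈ 𝓔, (vertsOf C).Finite) (v : V)
    (hfin : ∀ w, w ≠ v → {C | C ∈ 𝓔 ∧ w ∈ vertsOf C}.Finite) :
    ∃ 𝓔' ⊆ 𝓔, 𝓔'.Infinite ∧
      𝓔'.Pairwise (fun C₁ C₂ => vertsOf C₁ ∩ vertsOf C₂ ⊆ {v}) := by
  classical
  have hstep : ∀ s : Finset (Set (Sym2 V)), (∀ x ∈ s, x ∈ 𝓔) →
      ∃ y, y ∈ 𝓔 ∧ ∀ x ∈ s, x ≠ y ∧ vertsOf x ∩ vertsOf y ⊆ {v} := by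
    intro s hs
    have hbad : ∀ D ∈ s, {C | C ∈ 𝓔 ∧ ¬ (vertsOf D ∩ vertsOf C ⊆ {v})}.Finite := by
      intro D hD
      have hvD : (vertsOf D \ {v}).Finite := ((hverts D (hs D hD)).diff)
      refine (hvD.biUnion fun w hw => hfin w hw.2).subset ?_
      rintro C ⟨hC, hns⟩
      rw [Set.not_subset] at hns
      obtain ⟨w, hw, hwv⟩ := hns
      exact Set.mem_biUnion ⟨hw.1, hwv⟩ ⟨hC, hw.2⟩
    have htot : ((↑s : Set (Set (Sym2 V))) ∪
        ⋃ D ∈ s, {C | C ∈ 𝓔 ∧ ¬ (vertsOf D ∩ vertsOf C ⊆ {v})}).Finite :=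
      s.finite_toSet.union (s.finite_toSet.biUnion hbad)
    obtain ⟨y, hy⟩ := (hinf.diff htot).nonempty
    refine ⟨y, hy.1, fun x hx => ⟨?_, ?_⟩⟩
    · rintro rfl
      exact hy.2 (Set.mem_union_left _ hx)
    · by_contra hns
      exact hy.2 (Set.mem_union_right _ (Set.mem_biUnion hx ⟨hy.1, hns⟩))
  obtain ⟨f, hfP, hfr⟩ := exists_seq_of_forall_finset_exists (fun C => C ∈ 𝓔)
    (fun C D => C ≠ D ∧ vertsOf C ∩ vertsOf D ⊆ {v}) hstep
  have hinj : Function.Injective f := by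
    intro m n hmn
    by_contra hne
    rcases lt_or_gt_of_ne hne with h | h
    · exact (hfr m n h).1 hmn
    · exact (hfr n m h).1 hmn.symm
  refine ⟨Set.range f, ?_, Set.infinite_range_of_injective hinj, ?_⟩
  · rintro _ ⟨n, rfl⟩; exact hfP n
  · rintro _ ⟨m, rfl⟩ _ ⟨n, rfl⟩ hne
    rcases lt_trichotomy m n with h | rfl | h
    · exact (hfr m n h).2
    · exact absurd rfl hne
    · rw [Set.inter_comm]; exact (hfr n m h).2

/-- If `𝓓` is an infinite set of pairwise edge-disjoint finite cycles of a
finitely separable graph `G` (cycles identified with their edge sets), then there is an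
infinite subset `𝓓'` of `𝓓` and a vertex `v` such that any two distinct cycles in `𝓓'` meet
in no vertex other than possibly `v`. -/
theorem exists_infinite_subfamily_meeting_in_one_vertex {V : Type*} (G : SimpleGraph V)
    (hfs : FinitelySeparable G) (𝓓 : Set (Set (Sym2 V))) (hinf : 𝓓.Infinite)
    (hcyc : ∀ C ∈ 𝓓, IsCycleEdgeSet G C) (hdisj : 𝓓.Pairwise Disjoint) :
    ∃ 𝓓' ⊆ 𝓓, 𝓓'.Infinite ∧ ∃ v : V,
      𝓓'.Pairwise (fun C₁ C₂ => vertsOf C₁ ∩ vertsOf C₂ ⊆ {v}) := by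
  classical
  by_cases hcase : ∃ v, {C | C ∈ 𝓓 ∧ v ∈ vertsOf C}.Infinite
  · obtain ⟨v, hv⟩ := hcase
    have hsub : {C | C ∈ 𝓓 ∧ v ∈ vertsOf C} ⊆ 𝓓 := fun C hC => hC.1
    obtain ⟨𝓔', h𝓔'sub, h𝓔'inf, h𝓔'pw⟩ := extract_aux hv
      (fun C hC => vertsOf_finite_of_cycle (hcyc C hC.1)) v
      (fun w hw => ((pair_finite hfs hcyc hdisj (Ne.symm hw : v ≠ w)).subset
        (by rintro C ⟨⟨hC, hvC⟩, hwC⟩; exact ⟨hC, hvC, hwC⟩)))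
    exact ⟨𝓔', h𝓔'sub.trans hsub, h𝓔'inf, v, h𝓔'pw⟩
  · push_neg at hcase
    obtain ⟨C, hC⟩ := hinf.nonempty
    obtain ⟨v₀, p, hp, -⟩ := hcyc C hC
    obtain ⟨𝓔', h𝓔'sub, h𝓔'inf, h𝓔'pw⟩ := extract_aux hinf
      (fun C hC => vertsOf_finite_of_cycle (hcyc C hC)) v₀
      (fun w _ => hcase w)
    exact ⟨𝓔', h𝓔'sub, h𝓔'inf, v₀, h𝓔'pw⟩
end

section
/- Let G be a 2-connected finitely separable graph, and let X' and Y' be edge sets of G such that infinitely many vertices of G are incident both with an edge in X' and with an edge in Y'. Then G contains an infinite set of pairwise edge-disjoint finite cycles, each of which contains an edge of X' and an edge of Y'. -/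
open scoped Matroid

variable {V : Type*} {α : Type*}

section Aux

open SimpleGraph

variable {G : SimpleGraph V}

lemma vertsOf_finite {F : Set (Sym2 V)} (hF : F.Finite) : (vertsOf F).Finite := by
  have h : vertsOf F = ⋃ e ∈ F, {v | v ∈ e} := by
    ext v; simp [vertsOf]
  rw [h]
  refine hF.biUnion fun e _ => ?_
  induction e with
  | h a b =>
    have : {v | v ∈ s(a, b)} = {a, b} := by
      ext v; simp [Sym2.mem_iff]
    rw [this]
    exact (Set.finite_singleton b).insert a

/-- Splitting a `G`-walk avoiding a vertex at the first `F`-edge. -/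
lemma splitV (F : Set (Sym2 V)) {v x c : V} (p : G.Walk x c) (hv : v ∉ p.support) :
    (∃ q : (G.deleteEdges F).Walk x c, v ∉ q.support) ∨
      ∃ a ∈ vertsOf F, ∃ q : (G.deleteEdges F).Walk x a, v ∉ q.support := by
  induction p with
  | nil =>
    left
    exact ⟨Walk.nil, by simpa using hv⟩
  | cons h p ih =>
    rename_i u w d
    rw [Walk.support_cons, List.mem_cons] at hv
    push_neg at hv
    by_cases hF : s(u, w) ∈ F
    · right
      exact ⟨u, ⟨s(u, w), hF, by simp⟩, Walk.nil, by simpa using hv.1⟩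
    · have hadj : (G.deleteEdges F).Adj u w := by rw [deleteEdges_adj]; exact ⟨h, hF⟩
      rcases ih hv.2 with ⟨q, hq⟩ | ⟨a, ha, q, hq⟩
      · left
        exact ⟨Walk.cons hadj q, by simp [hq, hv.1]⟩
      · right
        exact ⟨a, ha, Walk.cons hadj q, by simp [hq, hv.1]⟩

/-- Splitting a `G`-walk avoiding an edge at the first `F`-edge. -/
lemma splitE (F : Set (Sym2 V)) {x c : V} (e : Sym2 V) (p : G.Walk x c) (he : e ∉ p.edges) :
    (∃ q : (G.deleteEdges F).Walk x c, e ∉ q.edges) ∨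
      ∃ a ∈ vertsOf F, ∃ q : (G.deleteEdges F).Walk x a, e ∉ q.edges := by
  induction p with
  | nil =>
    left
    exact ⟨Walk.nil, by simp⟩
  | cons h p ih =>
    rename_i u w d
    rw [Walk.edges_cons, List.mem_cons] at he
    push_neg at he
    by_cases hF : s(u, w) ∈ F
    · right
      exact ⟨u, ⟨s(u, w), hF, by simp⟩, Walk.nil, by simp⟩
    · have hadj : (G.deleteEdges F).Adj u w := by rw [deleteEdges_adj]; exact ⟨h, hF⟩
      rcases ih he.2 with ⟨q, hq⟩ | ⟨a, ha, q, hq⟩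
      · left
        exact ⟨Walk.cons hadj q, by simp [hq, he.1]⟩
      · right
        exact ⟨a, ha, Walk.cons hadj q, by simp [hq, he.1]⟩

lemma exists_walk_avoid (h2 : TwoConnected G) {v x y : V} (hx : x ≠ v) (hy : y ≠ v) :
    ∃ p : G.Walk x y, v ∉ p.support := by
  have hc := h2.2.2 v
  have hx' : x ∈ ({v}ᶜ : Set V) := by simpa using hx
  have hy' : y ∈ ({v}ᶜ : Set V) := by simpa using hy
  obtain ⟨q⟩ := hc ⟨x, hx'⟩ ⟨y, hy'⟩
  have key : v ∉ (q.map (Embedding.induce ({v}ᶜ : Set V)).toHom).support := by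
    rw [Walk.support_map]
    simp only [List.mem_map]
    rintro ⟨⟨u, hu⟩, -, h⟩
    exact hu (by simpa using h)
  exact ⟨q.map (Embedding.induce ({v}ᶜ : Set V)).toHom, key⟩

lemma exists_walk_avoid_edge (h2 : TwoConnected G) {v x : V} (h : G.Adj v x) :
    ∃ p : G.Walk v x, s(v, x) ∉ p.edges := by
  have hz : ∃ z : V, z ≠ v ∧ z ≠ x := by
    by_contra hcon
    push_neg at hcon
    have hsub : (Set.univ : Set V) ⊆ {v, x} := by
      intro z _
      rcases eq_or_ne z v with rfl | hzv
      · exact Set.mem_insert _ _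
      · exact Set.mem_insert_iff.2 (Or.inr (hcon z hzv))
    have h1 : (Set.univ : Set V).encard ≤ 2 :=
      (Set.encard_mono hsub).trans ((Set.encard_insert_le ({x} : Set V) v).trans (by rw [Set.encard_singleton]; norm_num))
    exact absurd h2.2.1 h1.not_gt
  obtain ⟨z, hzv, hzx⟩ := hz
  obtain ⟨p1, hp1⟩ := exists_walk_avoid (v := x) (x := v) (y := z) h2 h.ne hzx
  obtain ⟨p2, hp2⟩ := exists_walk_avoid (v := v) (x := z) (y := x) h2 hzv h.ne'
  refine ⟨p1.append p2, ?_⟩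
  rw [Walk.edges_append, List.mem_append]
  rintro (h1 | h1)
  · exact hp1 (p1.snd_mem_support_of_mem_edges h1)
  · exact hp2 (p2.fst_mem_support_of_mem_edges h1)

lemma isPath_concat {u v w : V} {p : G.Walk u v} (hp : p.IsPath) (h : G.Adj v w)
    (hw : w ∉ p.support) : (p.concat h).IsPath := by
  rw [Walk.isPath_def, Walk.support_concat]
  exact List.Nodup.append hp.support_nodup (by simp)
    (by simpa [List.disjoint_right] using hw)

lemma cycle_package {F : Set (Sym2 V)} {v x : V} (h : (G.deleteEdges F).Adj x v)
    (r : (G.deleteEdges F).Walk v x) (hr : r.IsPath) (he : s(x, v) ∉ r.edges) :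
    ∃ C : Set (Sym2 V), IsCycleEdgeSet G C ∧ Disjoint C F ∧ s(x, v) ∈ C ∧
      ∀ e ∈ r.edges, e ∈ C := by
  have hcyc : (Walk.cons h r).IsCycle := (Walk.cons_isCycle_iff r h).2 ⟨hr, he⟩
  have hsub : ∀ e ∈ (Walk.cons h r).edges, e ∈ G.edgeSet := fun e hew => by
    have := (Walk.cons h r).edges_subset_edgeSet hew
    rw [edgeSet_deleteEdges] at this
    exact this.1
  refine ⟨{e | e ∈ ((Walk.cons h r).transfer G hsub).edges},
    ⟨x, (Walk.cons h r).transfer G hsub, hcyc.transfer hsub, rfl⟩, ?_, ?_, ?_⟩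
  · rw [Set.disjoint_left]
    intro e hew
    rw [Set.mem_setOf_eq, Walk.edges_transfer] at hew
    have := (Walk.cons h r).edges_subset_edgeSet hew
    rw [edgeSet_deleteEdges] at this
    exact this.2
  · rw [Set.mem_setOf_eq, Walk.edges_transfer, Walk.edges_cons]
    exact List.mem_cons_self
  · intro e hee
    rw [Set.mem_setOf_eq, Walk.edges_transfer, Walk.edges_cons]
    exact List.mem_cons_of_mem _ hee

lemma main_lemma (h2 : TwoConnected G) {X' Y' : Set (Sym2 V)} (hX' : X' ⊆ G.edgeSet)
    (hY' : Y' ⊆ G.edgeSet) (hinf : (vertsOf X' ∩ vertsOf Y').Infinite)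
    {F : Set (Sym2 V)} (hF : F.Finite) :
    ∃ C, IsCycleEdgeSet G C ∧ (C ∩ X').Nonempty ∧ (C ∩ Y').Nonempty ∧ Disjoint C F := by
  classical
  by_contra hno
  push_neg at hno
  set H := G.deleteEdges F with hH
  set W := vertsOf F with hWdef
  have hW : W.Finite := vertsOf_finite hF
  -- no cycle in `H` through an `X'`-edge and a `Y'`-edge
  have hnoH : ∀ {v x : V} (h : H.Adj x v) (r : H.Walk v x), r.IsPath → s(x, v) ∉ r.edges →
      (s(x, v) ∈ X' ∨ ∃ e ∈ r.edges, e ∈ X') →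
      (s(x, v) ∈ Y' ∨ ∃ e ∈ r.edges, e ∈ Y') → False := by
    intro v x h r hr he hXc hYc
    obtain ⟨C, hC1, hC2, hC3, hC4⟩ := cycle_package h r hr he
    refine hno C hC1 ?_ ?_ hC2
    · rcases hXc with h' | ⟨e, he1, he2⟩
      · exact ⟨s(x, v), hC3, h'⟩
      · exact ⟨e, hC4 e he1, he2⟩
    · rcases hYc with h' | ⟨e, he1, he2⟩
      · exact ⟨s(x, v), hC3, h'⟩
      · exact ⟨e, hC4 e he1, he2⟩
  set Bad : Set V := ⋃ a ∈ W, ⋃ b ∈ W,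
    {u | H.Reachable a b ∧ ∀ p : H.Walk a b, u ∈ p.support} with hBadDef
  have hBad : Bad.Finite := by
    refine hW.biUnion fun a _ => hW.biUnion fun b _ => ?_
    by_cases h : H.Reachable a b
    · obtain ⟨p⟩ := h
      exact (p.support.finite_toSet).subset fun u hu => hu.2 p
    · have : {u | H.Reachable a b ∧ ∀ p : H.Walk a b, u ∈ p.support} = ∅ := by
        ext u; simp [h]
      rw [this]; exact Set.finite_empty
  have hcover : (vertsOf X' ∩ vertsOf Y') \ W ⊆ Bad := by
    rintro v ⟨⟨hvX, hvY⟩, hvW⟩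
    obtain ⟨e, heX, hve⟩ := hvX
    obtain ⟨f, hfY, hvf⟩ := hvY
    obtain ⟨x, rfl⟩ := Sym2.mem_iff_exists.1 hve
    obtain ⟨y, rfl⟩ := Sym2.mem_iff_exists.1 hvf
    have hax : G.Adj v x := hX' heX
    have hay : G.Adj v y := hY' hfY
    have hexF : s(v, x) ∉ F := fun hmem => hvW ⟨s(v, x), hmem, Sym2.mem_mk_left v x⟩
    have hfyF : s(v, y) ∉ F := fun hmem => hvW ⟨s(v, y), hmem, Sym2.mem_mk_left v y⟩
    have hHx : H.Adj v x := by rw [hH, deleteEdges_adj]; exact ⟨hax, hexF⟩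
    have hHy : H.Adj v y := by rw [hH, deleteEdges_adj]; exact ⟨hay, hfyF⟩
    by_cases hxy : x = y
    · -- one common edge in `X' ∩ Y'`
      subst hxy
      have hkey : ¬ ∃ p : H.Walk x v, s(v, x) ∉ p.edges := by
        rintro ⟨p, hp⟩
        refine hnoH hHx p.bypass p.bypass_isPath
          (fun hc => hp (p.edges_bypass_subset hc)) (Or.inl heX) (Or.inl hfY)
      obtain ⟨p0, hp0⟩ := exists_walk_avoid_edge h2 hax
      rcases splitE F (s(v, x)) p0 hp0 with ⟨q, hq⟩ | ⟨a, ha, q, hq⟩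
      · exact absurd ⟨q.reverse, by simpa using hq⟩ hkey
      rcases splitE F (s(v, x)) p0.reverse (by simpa using hp0) with ⟨q', hq'⟩ | ⟨b, hb, q', hq'⟩
      · exact absurd ⟨q', hq'⟩ hkey
      refine Set.mem_biUnion ha (Set.mem_biUnion hb ⟨?_, ?_⟩)
      · exact ⟨(q.reverse.append (Walk.cons hHx q'))⟩
      · intro p
        have hep : s(v, x) ∈ p.edges := by
          by_contra hep
          exact hkey ⟨q'.append (p.reverse.append q.reverse), by
            simp only [Walk.edges_append, Walk.edges_reverse, List.mem_append,
              List.mem_reverse]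
            push_neg
            exact ⟨hq', hep, hq⟩⟩
        exact p.fst_mem_support_of_mem_edges hep
    · -- two distinct edges at `v`
      have hkey : ¬ ∃ p : H.Walk x y, v ∉ p.support := by
        rintro ⟨p, hp⟩
        have hvb : v ∉ p.bypass.support := fun hc => hp (p.support_bypass_subset hc)
        refine hnoH (v := x) (x := v) hHx (p.bypass.concat hHy.symm)
          (isPath_concat p.bypass_isPath hHy.symm hvb) ?_ (Or.inl heX)
          (Or.inr ⟨s(y, v), by simp, by rwa [Sym2.eq_swap]⟩)
        rw [Walk.edges_concat, List.concat_eq_append, List.mem_append]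
        rintro (hc | hc)
        · exact hvb (p.bypass.fst_mem_support_of_mem_edges hc)
        · rw [List.mem_singleton, Sym2.eq_iff] at hc
          rcases hc with ⟨h1, h2⟩ | ⟨h1, h2⟩
          · exact hax.ne h2.symm
          · exact hxy h2
      obtain ⟨p0, hp0⟩ := exists_walk_avoid (v := v) h2 hax.ne' hay.ne'
      rcases splitV F (v := v) p0 hp0 with ⟨q, hq⟩ | ⟨a, ha, q, hq⟩
      · exact absurd ⟨q, hq⟩ hkey
      rcases splitV F (v := v) p0.reverse (by simpa using hp0) with ⟨q', hq'⟩ | ⟨b, hb, q', hq'⟩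
      · exact absurd ⟨q'.reverse, by simpa using hq'⟩ hkey
      refine Set.mem_biUnion ha (Set.mem_biUnion hb ⟨?_, ?_⟩)
      · exact ⟨q.reverse.append (Walk.cons hHx.symm (Walk.cons hHy q'))⟩
      · intro p
        by_contra hvp
        exact hkey ⟨q.append (p.append q'.reverse), by
          simp only [Walk.mem_support_append_iff, Walk.support_reverse, List.mem_reverse]
          push_neg
          exact ⟨hq, hvp, by simpa using hq'⟩⟩
  exact (hinf.diff hW) (hBad.subset hcover)

end Aux

theorem exists_infinitely_many_cycles' {V : Type*} (G : SimpleGraph V) (h2 : TwoConnected G)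
    (X' Y' : Set (Sym2 V)) (hX' : X' ⊆ G.edgeSet)
    (hY' : Y' ⊆ G.edgeSet) (hinf : (vertsOf X' ∩ vertsOf Y').Infinite) :
    ∃ 𝓓 : Set (Set (Sym2 V)), 𝓓.Infinite ∧ 𝓓.Pairwise Disjoint ∧
      ∀ C ∈ 𝓓, IsCycleEdgeSet G C ∧ (C ∩ X').Nonempty ∧ (C ∩ Y').Nonempty := by
  classical
  have main : ∀ F : Set (Sym2 V), ∃ C, F.Finite →
      (IsCycleEdgeSet G C ∧ (C ∩ X').Nonempty ∧ (C ∩ Y').Nonempty ∧ Disjoint C F ∧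
        C.Finite) := by
    intro F
    by_cases hF : F.Finite
    · obtain ⟨C, h1, h3, h4, h5⟩ := main_lemma h2 hX' hY' hinf hF
      have hCfin : C.Finite := by
        obtain ⟨v, w, hw, rfl⟩ := h1
        exact w.edges.finite_toSet
      exact ⟨C, fun _ => ⟨h1, h3, h4, h5, hCfin⟩⟩
    · exact ⟨∅, fun h => absurd h hF⟩
  choose f hf using main
  let g : ℕ → Set (Sym2 V) := fun n => Nat.rec ∅ (fun _ acc => acc ∪ f acc) n
  have hg0 : g 0 = ∅ := rfl
  have hgs : ∀ n, g (n + 1) = g n ∪ f (g n) := fun n => rfl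
  have hgfin : ∀ n, (g n).Finite := by
    intro n
    induction n with
    | zero => rw [hg0]; exact Set.finite_empty
    | succ n ih =>
      rw [hgs]
      exact ih.union ((hf (g n) ih).2.2.2.2)
  have hprop : ∀ n, IsCycleEdgeSet G (f (g n)) ∧ ((f (g n)) ∩ X').Nonempty ∧
      ((f (g n)) ∩ Y').Nonempty ∧ Disjoint (f (g n)) (g n) ∧ (f (g n)).Finite :=
    fun n => hf (g n) (hgfin n)
  have hmono : ∀ m n, m ≤ n → g m ⊆ g n := by
    intro m n h
    refine Nat.le_induction subset_rfl (fun n hmn ih => ?_) n h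
    rw [hgs]
    exact ih.trans Set.subset_union_left
  have hsub : ∀ n, f (g n) ⊆ g (n + 1) := fun n => by
    rw [hgs]; exact Set.subset_union_right
  have hdisj : ∀ m n, m < n → Disjoint (f (g m)) (f (g n)) := by
    intro m n h
    have h1 : f (g m) ⊆ g n := (hsub m).trans (hmono (m + 1) n h)
    exact ((hprop n).2.2.2.1.mono_right h1).symm
  have hne : ∀ n, (f (g n)).Nonempty := fun n =>
    ((hprop n).2.1).mono Set.inter_subset_left
  have hinj : Function.Injective (fun n => f (g n)) := by
    intro m n h
    simp only at h
    by_contra hne'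
    rcases Ne.lt_or_gt hne' with hlt | hlt
    · have hd := hdisj m n hlt
      rw [h] at hd
      exact (hne n).ne_empty (by simpa [Set.bot_eq_empty] using disjoint_self.1 hd)
    · have hd := hdisj n m hlt
      rw [h] at hd
      exact (hne n).ne_empty (by simpa [Set.bot_eq_empty] using disjoint_self.1 hd)
  refine ⟨Set.range (fun n => f (g n)), Set.infinite_range_of_injective hinj, ?_, ?_⟩
  · rintro _ ⟨m, rfl⟩ _ ⟨n, rfl⟩ hmn
    rcases Ne.lt_or_gt (fun h : m = n => hmn (congrArg (fun k => f (g k)) h)) with h | h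
    · exact hdisj m n h
    · exact (hdisj n m h).symm
  · rintro C ⟨n, rfl⟩
    exact ⟨(hprop n).1, (hprop n).2.1, (hprop n).2.2.1⟩


/-- If `X'` and `Y'` are edge sets of a 2-connected finitely separable graph
`G` such that infinitely many vertices are incident both with an edge in `X'` and with an
edge in `Y'`, then `G` has an infinite set of pairwise edge-disjoint finite cycles each
containing an edge of `X'` and an edge of `Y'`. -/
theorem exists_infinitely_many_cycles {V : Type*} (G : SimpleGraph V) (h2 : TwoConnected G)
    (hfs : FinitelySeparable G) (X' Y' : Set (Sym2 V)) (hX' : X' ⊆ G.edgeSet)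
    (hY' : Y' ⊆ G.edgeSet) (hinf : (vertsOf X' ∩ vertsOf Y').Infinite) :
    ∃ 𝓓 : Set (Set (Sym2 V)), 𝓓.Infinite ∧ 𝓓.Pairwise Disjoint ∧
      ∀ C ∈ 𝓓, IsCycleEdgeSet G C ∧ (C ∩ X').Nonempty ∧ (C ∩ Y').Nonempty :=
  exists_infinitely_many_cycles' G h2 X' Y' hX' hY' hinf
end

section
/- Let G be a 2-connected finitely separable graph, let X be a set of edges of G and Y := E(G) ∖ X, and suppose that infinitely many vertices of G are incident both with an edge in X and with an edge in Y. Then there exist a vertex v of G and an infinite set 𝓓 of pairwise edge-disjoint finite cycles of G, each containing an edge of X and an edge of Y, such that any two distinct cycles in 𝓓 have no common vertex other than possibly v. -/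
open scoped Matroid

variable {V : Type*} {α : Type*}

namespace Stmt5
open SimpleGraph

variable {V : Type*} {G : SimpleGraph V}

lemma walk_split {a c : V} (p : G.Walk a c) (g : Sym2 V) (hg : g ∈ p.edges) :
    ∃ (x y : V) (q : G.Walk a x) (h : G.Adj x y) (r : G.Walk y c),
      p = q.append (Walk.cons h r) ∧ s(x, y) = g := by
  induction p with
  | nil => simp at hg
  | @cons a b c h' p' ih =>
    rw [Walk.edges_cons, List.mem_cons] at hg
    rcases hg with hg | hg
    · exact ⟨a, b, Walk.nil, h', p', rfl, hg.symm⟩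
    · obtain ⟨x, y, q, h, r, hpe, hs⟩ := ih hg
      exact ⟨x, y, Walk.cons h' q, h, r, by rw [hpe, Walk.cons_append], hs⟩

lemma detour {x₂ y₂ u₂ : V} (p₂ : G.Walk x₂ y₂) (hp₂ : p₂.IsPath) (hu₂ : u₂ ∉ p₂.support)
    (hax : G.Adj u₂ x₂) (hay : G.Adj u₂ y₂) (g : Sym2 V) (hg : g ∈ p₂.edges)
    {x y : V} (hxy : s(x, y) = g) :
    ∃ D : G.Walk x y,
      (∀ e ∈ D.edges, e ∈ p₂.edges ∨ e = s(u₂, x₂) ∨ e = s(u₂, y₂)) ∧ g ∉ D.edges ∧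
      (∀ w ∈ D.support, w ∈ p₂.support ∨ w = u₂) := by
  obtain ⟨x', y', q, h, r, hpe, hs⟩ := walk_split p₂ g hg
  have hu₂g : u₂ ∉ g := by
    intro hmem
    rw [← hs, Sym2.mem_iff] at hmem
    rcases hmem with rfl | rfl
    · exact hu₂ (Walk.fst_mem_support_of_mem_edges p₂ (hs ▸ hg))
    · exact hu₂ (Walk.snd_mem_support_of_mem_edges p₂ (hs ▸ hg))
  have hedges : p₂.edges = q.edges ++ s(x', y') :: r.edges := by
    rw [hpe, Walk.edges_append, Walk.edges_cons]
  have hnd : p₂.edges.Nodup := hp₂.isTrail.edges_nodup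
  have hgq : g ∉ q.edges := by
    rw [hedges] at hnd
    intro hmem
    exact (List.disjoint_of_nodup_append hnd) hmem (hs ▸ List.mem_cons_self)
  have hgr : g ∉ r.edges := by
    rw [hedges] at hnd
    have := (List.nodup_append.mp hnd).2.1
    rw [List.nodup_cons] at this
    exact fun hmem => this.1 (hs ▸ hmem)
  have hqsub : ∀ e ∈ q.edges, e ∈ p₂.edges := fun e he => by
    rw [hedges]; exact List.mem_append_left _ he
  have hrsub : ∀ e ∈ r.edges, e ∈ p₂.edges := fun e he => by
    rw [hedges]; exact List.mem_append_right _ (List.mem_cons_of_mem _ he)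
  have hqsup : ∀ w ∈ q.support, w ∈ p₂.support := fun w hw => by
    rw [hpe, Walk.mem_support_append_iff]; exact Or.inl hw
  have hrsup : ∀ w ∈ r.support, w ∈ p₂.support := fun w hw => by
    rw [hpe, Walk.mem_support_append_iff, Walk.support_cons]
    exact Or.inr (List.mem_cons_of_mem _ hw)
  -- build the detour walk
  let D0 : G.Walk x' y' := q.reverse.append (Walk.cons hax.symm (Walk.cons hay r.reverse))
  have hD0e : ∀ e ∈ D0.edges, e ∈ p₂.edges ∨ e = s(u₂, x₂) ∨ e = s(u₂, y₂) := by
    intro e he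
    simp only [D0, Walk.edges_append, Walk.edges_cons, Walk.edges_reverse, List.mem_append,
      List.mem_reverse, List.mem_cons] at he
    rcases he with he | he | he | he
    · exact Or.inl (hqsub _ he)
    · exact Or.inr (Or.inl (by rw [he, Sym2.eq_swap]))
    · exact Or.inr (Or.inr he)
    · exact Or.inl (hrsub _ he)
  have hD0g : g ∉ D0.edges := by
    intro he
    simp only [D0, Walk.edges_append, Walk.edges_cons, Walk.edges_reverse, List.mem_append,
      List.mem_reverse, List.mem_cons] at he
    rcases he with he | he | he | he
    · exact hgq he
    · exact hu₂g (he ▸ Sym2.mem_mk_right _ _)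
    · exact hu₂g (he ▸ Sym2.mem_mk_left _ _)
    · exact hgr he
  have hD0s : ∀ w ∈ D0.support, w ∈ p₂.support ∨ w = u₂ := by
    intro w hw
    simp only [D0, Walk.mem_support_append_iff, Walk.support_cons, Walk.support_reverse,
      List.mem_reverse, List.mem_cons] at hw
    rcases hw with hw | hw | hw | hw
    · exact Or.inl (hqsup _ hw)
    · exact Or.inl (hw ▸ p₂.start_mem_support)
    · exact Or.inr hw
    · exact Or.inl (hrsup _ hw)
  -- orient
  rw [← hs, Sym2.eq_iff] at hxy
  rcases hxy with ⟨rfl, rfl⟩ | ⟨rfl, rfl⟩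
  · exact ⟨D0, hD0e, hD0g, hD0s⟩
  · refine ⟨D0.reverse, ?_, ?_, ?_⟩
    · intro e he; rw [Walk.edges_reverse, List.mem_reverse] at he; exact hD0e _ he
    · rw [Walk.edges_reverse, List.mem_reverse]; exact hD0g
    · intro w hw; rw [Walk.support_reverse, List.mem_reverse] at hw; exact hD0s _ hw

def vertsOf' (X : Set (Sym2 V)) : Set V := {v | ∃ e ∈ X, v ∈ e}

/-- `u` has an `X`-edge `s(u,x)` and a `Y`-edge `s(u,y)` and a path from `x` to `y` avoiding
the vertex `u` and the edge set `F`. -/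
def Good (G : SimpleGraph V) (X Y F : Set (Sym2 V)) (u : V) : Prop :=
  ∃ (x y : V) (p : G.Walk x y), p.IsPath ∧ u ∉ p.support ∧
    s(u, x) ∈ X ∧ s(u, y) ∈ Y ∧ s(u, x) ∉ F ∧ s(u, y) ∉ F ∧ ∀ e ∈ p.edges, e ∉ F

def Bad (G : SimpleGraph V) (X Y F : Set (Sym2 V)) : Set V :=
  {u | u ∈ vertsOf' X ∧ u ∈ vertsOf' Y ∧ ¬ Good G X Y F u}

lemma exists_path_avoiding (h2c : ∀ v : V, (G.induce ({v}ᶜ : Set V)).Connected)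
    {u x y : V} (hx : x ≠ u) (hy : y ≠ u) :
    ∃ p : G.Walk x y, p.IsPath ∧ u ∉ p.support := by
  classical
  obtain ⟨w⟩ := (h2c u).preconnected ⟨x, hx⟩ ⟨y, hy⟩
  let f := SimpleGraph.Embedding.comap (Function.Embedding.subtype (· ∈ ({u}ᶜ : Set V))) G
  let w' : G.Walk x y := w.map f.toHom
  refine ⟨w'.bypass, w'.bypass_isPath, fun hmem => ?_⟩
  have h3 := w'.support_bypass_subset hmem
  rw [show w'.support = w.support.map f.toHom from Walk.support_map (f := f.toHom) (p := w)] at h3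
  simp only [List.mem_map] at h3
  obtain ⟨⟨a, ha⟩, -, heq⟩ := h3
  exact ha (show a ∈ ({u} : Set V) from heq ▸ rfl)

lemma good_empty {X Y : Set (Sym2 V)} (h2c : ∀ v : V, (G.induce ({v}ᶜ : Set V)).Connected)
    (hX : X ⊆ G.edgeSet) (hYs : Y ⊆ G.edgeSet) {u : V}
    (huX : u ∈ vertsOf' X) (huY : u ∈ vertsOf' Y) : Good G X Y ∅ u := by
  obtain ⟨e, heX, hue⟩ := huX
  obtain ⟨f, hfY, huf⟩ := huY
  obtain ⟨x, rfl⟩ := Sym2.mem_iff_exists.mp hue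
  obtain ⟨y, rfl⟩ := Sym2.mem_iff_exists.mp huf
  have hax : G.Adj u x := (SimpleGraph.mem_edgeSet G).mp (hX heX)
  have hay : G.Adj u y := (SimpleGraph.mem_edgeSet G).mp (hYs hfY)
  obtain ⟨p, hp, hup⟩ := exists_path_avoiding h2c hax.ne' hay.ne'
  exact ⟨x, y, p, hp, hup, heX, hfY, by simp, by simp, by simp⟩

lemma bad_subset_insert {X Y : Set (Sym2 V)} (hX : X ⊆ G.edgeSet) (hYs : Y ⊆ G.edgeSet)
    (g : Sym2 V) (F' : Set (Sym2 V)) :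
    ∃ T : Set V, T.Finite ∧
      Bad G X Y (insert g F') ⊆ Bad G X Y F' ∪ {w | w ∈ g} ∪ T := by
  classical
  by_cases hex : ∃ u₂ : V, u₂ ∉ g ∧ ¬ Good G X Y (insert g F') u₂ ∧ Good G X Y F' u₂
  · obtain ⟨u₂, hu₂g, hbad₂, x₂, y₂, p₂, hp₂, hu₂s, hx₂X, hy₂Y, hx₂F, hy₂F, hp₂F⟩ := hex
    have hax₂ : G.Adj u₂ x₂ := (SimpleGraph.mem_edgeSet G).mp (hX hx₂X)
    have hay₂ : G.Adj u₂ y₂ := (SimpleGraph.mem_edgeSet G).mp (hYs hy₂Y)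
    have hgp₂ : g ∈ p₂.edges := by
      by_contra hgp₂
      exact hbad₂ ⟨x₂, y₂, p₂, hp₂, hu₂s, hx₂X, hy₂Y,
        by simp only [Set.mem_insert_iff, not_or]; exact ⟨fun h => hu₂g (h ▸ Sym2.mem_mk_left _ _), hx₂F⟩,
        by simp only [Set.mem_insert_iff, not_or]; exact ⟨fun h => hu₂g (h ▸ Sym2.mem_mk_left _ _), hy₂F⟩,
        fun e he hmem => ((Set.mem_insert_iff).mp hmem).elim (fun h => hgp₂ (h ▸ he)) (hp₂F e he)⟩
    refine ⟨{w | w ∈ p₂.support} ∪ {u₂}, (p₂.support.finite_toSet).union (Set.finite_singleton _), ?_⟩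
    rintro u₁ ⟨hu₁X, hu₁Y, hbad₁⟩
    by_contra hnot
    simp only [Set.mem_union, Set.mem_setOf_eq, Set.mem_singleton_iff, not_or] at hnot
    obtain ⟨⟨hnb, hng⟩, hnp₂, hnu₂⟩ := hnot
    have hgood₁ : Good G X Y F' u₁ := by
      by_contra hc; exact hnb ⟨hu₁X, hu₁Y, hc⟩
    obtain ⟨x₁, y₁, p₁, hp₁, hu₁s, hx₁X, hy₁Y, hx₁F, hy₁F, hp₁F⟩ := hgood₁
    have hx₁g : s(u₁, x₁) ≠ g := fun h => hng (h ▸ Sym2.mem_mk_left _ _)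
    have hy₁g : s(u₁, y₁) ≠ g := fun h => hng (h ▸ Sym2.mem_mk_left _ _)
    by_cases hgp₁ : g ∈ p₁.edges
    · -- surgery
      obtain ⟨xx, yy, q₁, h₁, r₁, hpe₁, hs₁⟩ := walk_split p₁ g hgp₁
      obtain ⟨D, hDe, hDg, hDs⟩ := detour p₂ hp₂ hu₂s hax₂ hay₂ g hgp₂ hs₁
      have hedges₁ : p₁.edges = q₁.edges ++ s(xx, yy) :: r₁.edges := by
        rw [hpe₁, Walk.edges_append, Walk.edges_cons]
      have hnd₁ : p₁.edges.Nodup := hp₁.isTrail.edges_nodup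
      have hgq₁ : g ∉ q₁.edges := by
        rw [hedges₁] at hnd₁
        exact fun hmem => (List.disjoint_of_nodup_append hnd₁) hmem (hs₁ ▸ List.mem_cons_self)
      have hgr₁ : g ∉ r₁.edges := by
        rw [hedges₁] at hnd₁
        have h5 := (List.nodup_append.mp hnd₁).2.1
        rw [List.nodup_cons] at h5
        exact fun hmem => h5.1 (hs₁ ▸ hmem)
      have hq₁sub : ∀ e ∈ q₁.edges, e ∈ p₁.edges := fun e he => by
        rw [hedges₁]; exact List.mem_append_left _ he
      have hr₁sub : ∀ e ∈ r₁.edges, e ∈ p₁.edges := fun e he => by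
        rw [hedges₁]; exact List.mem_append_right _ (List.mem_cons_of_mem _ he)
      have hq₁sup : ∀ w ∈ q₁.support, w ∈ p₁.support := fun w hw => by
        rw [hpe₁, Walk.mem_support_append_iff]; exact Or.inl hw
      have hr₁sup : ∀ w ∈ r₁.support, w ∈ p₁.support := fun w hw => by
        rw [hpe₁, Walk.mem_support_append_iff, Walk.support_cons]
        exact Or.inr (List.mem_cons_of_mem _ hw)
      let W : G.Walk x₁ y₁ := q₁.append (D.append r₁)
      have hWs : u₁ ∉ W.support := by
        intro hmem
        simp only [W, Walk.mem_support_append_iff] at hmem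
        rcases hmem with hmem | hmem | hmem
        · exact hu₁s (hq₁sup _ hmem)
        · rcases hDs _ hmem with h6 | h6
          · exact hnp₂ h6
          · exact hnu₂ h6
        · exact hu₁s (hr₁sup _ hmem)
      have hWe : ∀ e ∈ W.edges, e ∉ insert g F' := by
        intro e he
        simp only [W, Walk.edges_append, List.mem_append] at he
        simp only [Set.mem_insert_iff, not_or]
        rcases he with he | he | he
        · exact ⟨fun h => hgq₁ (h ▸ he), hp₁F e (hq₁sub e he)⟩
        · refine ⟨fun h => hDg (h ▸ he), ?_⟩
          rcases hDe e he with h6 | h6 | h6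
          · exact hp₂F e h6
          · exact h6 ▸ hx₂F
          · exact h6 ▸ hy₂F
        · exact ⟨fun h => hgr₁ (h ▸ he), hp₁F e (hr₁sub e he)⟩
      refine hbad₁ ⟨x₁, y₁, W.bypass, W.bypass_isPath,
        fun hmem => hWs (W.support_bypass_subset hmem), hx₁X, hy₁Y,
        by simp only [Set.mem_insert_iff, not_or]; exact ⟨hx₁g, hx₁F⟩,
        by simp only [Set.mem_insert_iff, not_or]; exact ⟨hy₁g, hy₁F⟩,
        fun e he => hWe e (W.edges_bypass_subset he)⟩
    · exact hbad₁ ⟨x₁, y₁, p₁, hp₁, hu₁s, hx₁X, hy₁Y,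
        by simp only [Set.mem_insert_iff, not_or]; exact ⟨hx₁g, hx₁F⟩,
        by simp only [Set.mem_insert_iff, not_or]; exact ⟨hy₁g, hy₁F⟩,
        fun e he hmem => ((Set.mem_insert_iff).mp hmem).elim (fun h => hgp₁ (h ▸ he)) (hp₁F e he)⟩
  · push_neg at hex
    refine ⟨∅, Set.finite_empty, ?_⟩
    rintro u ⟨huX, huY, hbad⟩
    by_cases hug : u ∈ g
    · exact Or.inl (Or.inr hug)
    · exact Or.inl (Or.inl ⟨huX, huY, hex u hug hbad⟩)

lemma sym2_finite (g : Sym2 V) : ({w | w ∈ g} : Set V).Finite := by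
  induction g using Sym2.ind with
  | _ a b =>
    have : ({w | w ∈ s(a, b)} : Set V) = {a, b} := by
      ext w; simp [Sym2.mem_iff]
    rw [this]; exact (Set.finite_singleton b).insert a

lemma bad_finite {X Y : Set (Sym2 V)} (h2c : ∀ v : V, (G.induce ({v}ᶜ : Set V)).Connected)
    (hX : X ⊆ G.edgeSet) (hYs : Y ⊆ G.edgeSet) {F : Set (Sym2 V)} (hF : F.Finite) :
    (Bad G X Y F).Finite := by
  refine Set.Finite.induction_on (motive := fun F _ => (Bad G X Y F).Finite) F hF ?_ ?_
  · have h0 : Bad G X Y ∅ = ∅ := by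
      ext u
      simp only [Bad, Set.mem_setOf_eq, Set.mem_empty_iff_false, iff_false, not_and]
      exact fun huX huY => not_not_intro (good_empty h2c hX hYs huX huY)
    rw [h0]; exact Set.finite_empty
  · intro g F' _ _ ih
    obtain ⟨T, hT, hsub⟩ := bad_subset_insert hX hYs g F'
    exact Set.Finite.subset ((ih.union (sym2_finite g)).union hT) hsub


lemma good_cycle {X Y : Set (Sym2 V)} (hX : X ⊆ G.edgeSet) (hYs : Y ⊆ G.edgeSet)
    (hdisj : ∀ e, e ∈ X → e ∉ Y) {F : Set (Sym2 V)} {u : V} (h : Good G X Y F u) :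
    ∃ (a : V) (Z : G.Walk a a), Z.IsCycle ∧ (∃ e ∈ X, e ∈ Z.edges) ∧ (∃ e ∈ Y, e ∈ Z.edges) ∧
      ∀ e ∈ Z.edges, e ∉ F := by
  obtain ⟨x, y, p, hp, hus, hxX, hyY, hxF, hyF, hpF⟩ := h
  have hax : G.Adj u x := (SimpleGraph.mem_edgeSet G).mp (hX hxX)
  have hay : G.Adj u y := (SimpleGraph.mem_edgeSet G).mp (hYs hyY)
  have hxy : x ≠ y := by
    rintro rfl
    exact hdisj _ hxX hyY
  let inner : G.Walk x u := p.concat hay.symm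
  have hinner : inner.IsPath := by
    rw [← Walk.isPath_reverse_iff]
    show (p.concat hay.symm).reverse.IsPath
    rw [Walk.reverse_concat, Walk.cons_isPath_iff]
    exact ⟨(Walk.isPath_reverse_iff p).mpr hp,
      fun hmem => hus (by rwa [Walk.support_reverse, List.mem_reverse] at hmem)⟩
  have hux : s(u, x) ∉ inner.edges := by
    intro hmem
    rw [Walk.edges_concat, List.concat_eq_append, List.mem_append, List.mem_singleton] at hmem
    rcases hmem with hmem | hmem
    · exact hus (Walk.fst_mem_support_of_mem_edges p hmem)
    · rw [Sym2.eq_iff] at hmem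
      rcases hmem with ⟨rfl, rfl⟩ | ⟨-, rfl⟩
      · exact hax.ne rfl
      · exact hxy rfl
  refine ⟨u, Walk.cons hax inner, (Walk.cons_isCycle_iff inner hax).mpr ⟨hinner, hux⟩,
    ⟨s(u, x), hxX, ?_⟩, ⟨s(u, y), hyY, ?_⟩, ?_⟩
  · rw [Walk.edges_cons]; exact List.mem_cons_self
  · rw [Walk.edges_cons, Walk.edges_concat]
    refine List.mem_cons_of_mem _ ?_
    rw [List.concat_eq_append, List.mem_append, List.mem_singleton]
    exact Or.inr (Sym2.eq_swap)
  · intro e he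
    rw [Walk.edges_cons, List.mem_cons] at he
    rcases he with rfl | he
    · exact hxF
    · rw [Walk.edges_concat, List.concat_eq_append, List.mem_append, List.mem_singleton] at he
      rcases he with he | rfl
      · exact hpF e he
      · rwa [Sym2.eq_swap]

lemma greedy {α : Type*} {D : Type*} (E : D → Set α) (hE : ∀ d, (E d).Finite)
    (step : ∀ F : Set α, F.Finite → ∃ d, ∀ e ∈ E d, e ∉ F) :
    ∃ seq : ℕ → D, ∀ m n, m < n → ∀ e ∈ E (seq m), e ∉ E (seq n) := by
  classical
  choose pick hpick using step
  let FF : ℕ → {F : Set α // F.Finite} := fun n =>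
    Nat.rec ⟨∅, Set.finite_empty⟩ (fun _ Fp => ⟨Fp.1 ∪ E (pick Fp.1 Fp.2), Fp.2.union (hE _)⟩) n
  have hFFsucc : ∀ n, (FF (n+1)).1 = (FF n).1 ∪ E (pick (FF n).1 (FF n).2) := fun n => rfl
  have hmono : ∀ m n, m ≤ n → (FF m).1 ⊆ (FF n).1 := by
    intro m n h
    induction n, h using Nat.le_induction with
    | base => exact subset_rfl
    | succ n hmn ih => rw [hFFsucc n]; exact ih.trans Set.subset_union_left
  refine ⟨fun n => pick (FF n).1 (FF n).2, ?_⟩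
  intro m n hmn e hem hen
  have h1 : e ∈ (FF (m+1)).1 := by
    rw [hFFsucc m]; exact Set.mem_union_right _ hem
  exact hpick (FF n).1 (FF n).2 e hen (hmono _ _ hmn h1)

lemma extract {β : Type*} {T : ℕ → Set β} (hTfin : ∀ n, (T n).Finite) {A : Set ℕ}
    (hA : A.Infinite) {v : β} (hfin : ∀ w, w ≠ v → {n | n ∈ A ∧ w ∈ T n}.Finite) :
    ∃ idx : ℕ → ℕ, Function.Injective idx ∧ (∀ k, idx k ∈ A) ∧
      ∀ j k, j ≠ k → ∀ w, w ∈ T (idx j) → w ∈ T (idx k) → w = v := by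
  classical
  have step : ∀ N : Set ℕ, N.Finite → ∃ n, n ∈ A ∧ n ∉ N ∧
      ∀ m ∈ N, ∀ w, w ∈ T n → w ∈ T m → w = v := by
    intro N hN
    have hbad : (N ∪ ⋃ m ∈ N, ⋃ w ∈ (T m \ {v}), {n | n ∈ A ∧ w ∈ T n}).Finite := by
      refine hN.union (hN.biUnion fun m _ => ((hTfin m).diff).biUnion fun w hw => ?_)
      exact hfin w hw.2
    obtain ⟨n, hnA, hnbad⟩ := (hA.diff hbad).nonempty
    simp only [Set.mem_union, Set.mem_iUnion, Set.mem_setOf_eq, not_or, not_exists] at hnbad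
    refine ⟨n, hnA, hnbad.1, ?_⟩
    intro m hm w hwn hwm
    by_contra hwv
    exact hnbad.2 m hm w ⟨hwm, hwv⟩ ⟨hnA, hwn⟩
  choose pick h1 h2 h3 using step
  let NN : ℕ → {N : Set ℕ // N.Finite} := fun k =>
    Nat.rec ⟨∅, Set.finite_empty⟩ (fun _ Np => ⟨insert (pick Np.1 Np.2) Np.1, Np.2.insert _⟩) k
  let idx : ℕ → ℕ := fun k => pick (NN k).1 (NN k).2
  have hNNsucc : ∀ k, (NN (k+1)).1 = insert (idx k) (NN k).1 := fun k => rfl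
  have hmem : ∀ j k, j < k → idx j ∈ (NN k).1 := by
    intro j k hjk
    induction k with
    | zero => omega
    | succ k ih =>
      rw [hNNsucc k]
      rcases Nat.lt_succ_iff_lt_or_eq.mp hjk with h | h
      · exact Set.mem_insert_of_mem _ (ih h)
      · exact h ▸ Set.mem_insert _ _
  have hinj : Function.Injective idx := by
    intro j k hjk
    by_contra hne
    rcases Nat.lt_or_ge j k with h | h
    · have hm := hmem j k h
      rw [show idx j = idx k from hjk] at hm
      exact h2 (NN k).1 (NN k).2 hm
    · have hm := hmem k j (by omega)
      rw [show idx k = idx j from hjk.symm] at hm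
      exact h2 (NN j).1 (NN j).2 hm
  refine ⟨idx, hinj, fun k => h1 _ _, ?_⟩
  intro j k hjk w hwj hwk
  rcases Nat.lt_or_ge j k with h | h
  · exact h3 (NN k).1 (NN k).2 (idx j) (hmem j k h) w hwk hwj
  · exact h3 (NN j).1 (NN j).2 (idx k) (hmem k j (by omega)) w hwj hwk

end Stmt5

/-- If `X` is an edge set of a 2-connected finitely separable graph `G`,
`Y = E(G) \ X`, and infinitely many vertices are incident both with an edge in `X` and with
an edge in `Y`, then there are a vertex `v` and an infinite set `𝓓` of pairwise edge-disjoint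
finite cycles, each containing an edge of `X` and an edge of `Y`, such that any two distinct
cycles of `𝓓` meet in no vertex other than possibly `v`. -/
theorem exists_infinitely_many_cycles_through_v {V : Type*} (G : SimpleGraph V)
    (h2 : TwoConnected G) (hfs : FinitelySeparable G) (X Y : Set (Sym2 V))
    (hX : X ⊆ G.edgeSet) (hY : Y = G.edgeSet \ X)
    (hinf : (vertsOf X ∩ vertsOf Y).Infinite) :
    ∃ (v : V) (𝓓 : Set (Set (Sym2 V))), 𝓓.Infinite ∧ 𝓓.Pairwise Disjoint ∧
      (∀ C ∈ 𝓓, IsCycleEdgeSet G C ∧ (C ∩ X).Nonempty ∧ (C ∩ Y).Nonempty) ∧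
      𝓓.Pairwise (fun C₁ C₂ => vertsOf C₁ ∩ vertsOf C₂ ⊆ {v}) := by
  classical
  obtain ⟨hConn, hcard, h2c⟩ := h2
  have hYs : Y ⊆ G.edgeSet := by rw [hY]; exact Set.diff_subset
  have hdisj : ∀ e, e ∈ X → e ∉ Y := by
    intro e heX heY
    rw [hY] at heY
    exact heY.2 heX
  -- the greedy data type: cycles with an X-edge and a Y-edge
  have stepEx : ∀ F : Set (Sym2 V), F.Finite →
      ∃ d : {q : Σ' (a : V), G.Walk a a // q.2.IsCycle ∧ (∃ e ∈ X, e ∈ q.2.edges) ∧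
        (∃ e ∈ Y, e ∈ q.2.edges)}, ∀ e ∈ {e | e ∈ d.1.2.edges}, e ∉ F := by
    intro F hF
    have hbadfin := Stmt5.bad_finite (G := G) h2c hX hYs hF
    obtain ⟨u, huS, hub⟩ := (hinf.diff hbadfin).nonempty
    have hgood : Stmt5.Good G X Y F u := by
      by_contra hng
      exact hub ⟨huS.1, huS.2, hng⟩
    obtain ⟨a, Z, hZc, hZX, hZY, hZF⟩ := Stmt5.good_cycle hX hYs hdisj hgood
    exact ⟨⟨⟨a, Z⟩, hZc, hZX, hZY⟩, fun e he => hZF e he⟩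
  obtain ⟨seq, hseq⟩ := Stmt5.greedy
    (D := {q : Σ' (a : V), G.Walk a a // q.2.IsCycle ∧ (∃ e ∈ X, e ∈ q.2.edges) ∧
      (∃ e ∈ Y, e ∈ q.2.edges)})
    (fun d => {e | e ∈ d.1.2.edges}) (fun d => (d.1.2.edges).finite_toSet) stepEx
  set ES : ℕ → Set (Sym2 V) := fun n => {e | e ∈ (seq n).1.2.edges} with hES
  set T : ℕ → Set V := fun n => {w | w ∈ (seq n).1.2.support} with hT
  have hdis : ∀ m n, m ≠ n → ∀ e, e ∈ ES m → e ∉ ES n := by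
    intro m n hmn e hem hen
    rcases Nat.lt_or_ge m n with h | h
    · exact hseq m n h e hem hen
    · exact hseq n m (by omega) e hen hem
  have hTfin : ∀ n, (T n).Finite := fun n => ((seq n).1.2.support).finite_toSet
  have hESne : ∀ n, (ES n).Nonempty := by
    intro n
    obtain ⟨e, -, he⟩ := (seq n).2.2.1
    exact ⟨e, he⟩
  -- at most one vertex can lie on infinitely many of the cycles
  have h2v : ∀ v w : V, v ≠ w → {n | v ∈ T n ∧ w ∈ T n}.Finite := by
    intro v w hvw
    obtain ⟨Fc, hFc, hnr⟩ := hfs v w hvw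
    have key : ∀ n ∈ {n | v ∈ T n ∧ w ∈ T n}, ∃ e, e ∈ Fc ∧ e ∈ ES n := by
      rintro n ⟨hv, hw⟩
      by_contra hno
      push_neg at hno
      have hv' : v ∈ (seq n).1.2.support := hv
      have hw' : w ∈ (seq n).1.2.support := hw
      let W : G.Walk v w := ((seq n).1.2.dropUntil v hv').append ((seq n).1.2.takeUntil w hw')
      have hWe : ∀ e ∈ W.edges, e ∈ (G.deleteEdges Fc).edgeSet := by
        intro e he
        have heZ : e ∈ (seq n).1.2.edges := by
          rw [SimpleGraph.Walk.edges_append, List.mem_append] at he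
          rcases he with he | he
          · exact SimpleGraph.Walk.edges_dropUntil_subset _ _ he
          · exact SimpleGraph.Walk.edges_takeUntil_subset _ _ he
        rw [SimpleGraph.edgeSet_deleteEdges]
        exact ⟨(seq n).1.2.edges_subset_edgeSet heZ, fun hmem => hno e hmem heZ⟩
      exact hnr ⟨W.transfer (G.deleteEdges Fc) hWe⟩
    set Sset := {n | v ∈ T n ∧ w ∈ T n} with hSset
    let f : ℕ → Sym2 V := fun n => if h : n ∈ Sset then (key n h).choose else s(v, v)
    have hf : ∀ n ∈ Sset, f n ∈ Fc ∧ f n ∈ ES n := by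
      intro n hn
      simp only [f, dif_pos hn]
      exact (key n hn).choose_spec
    refine Set.Finite.of_finite_image (f := f) (hFc.subset ?_) ?_
    · rintro e ⟨n, hn, rfl⟩
      exact (hf n hn).1
    · intro m hm n hn hfm
      by_contra hmn
      exact hdis m n hmn (f m) (hf m hm).2 (hfm ▸ (hf n hn).2)
  -- choose the special vertex and an infinite index set
  have hsel : ∃ (v : V) (A : Set ℕ), A.Infinite ∧ ∀ w, w ≠ v → {n | n ∈ A ∧ w ∈ T n}.Finite := by
    by_cases hEx : ∃ v : V, {n | v ∈ T n}.Infinite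
    · obtain ⟨v, hv⟩ := hEx
      refine ⟨v, {n | v ∈ T n}, hv, ?_⟩
      intro w hwv
      exact (h2v v w (Ne.symm hwv)).subset (fun n hn => ⟨hn.1, hn.2⟩)
    · push_neg at hEx
      obtain ⟨v⟩ := hConn.nonempty
      refine ⟨v, Set.univ, Set.infinite_univ, ?_⟩
      intro w _
      exact (hEx w).subset (fun n hn => hn.2)
  obtain ⟨v, A, hA, hfin⟩ := hsel
  obtain ⟨idx, hidxinj, -, hidxT⟩ := Stmt5.extract hTfin hA hfin
  have hverts : ∀ (n : ℕ) (w : V), w ∈ {w | ∃ e ∈ ES n, w ∈ e} → w ∈ T n := by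
    rintro n w ⟨e, he, hwe⟩
    induction e using Sym2.ind with
    | _ a b =>
      rcases Sym2.mem_iff.mp hwe with rfl | rfl
      · exact SimpleGraph.Walk.fst_mem_support_of_mem_edges _ he
      · exact SimpleGraph.Walk.snd_mem_support_of_mem_edges _ he
  have hESinj : Function.Injective (fun k => ES (idx k)) := by
    intro k l hkl
    by_contra hne
    obtain ⟨e, he⟩ := hESne (idx k)
    have hkl' : ES (idx k) = ES (idx l) := hkl
    exact hdis (idx k) (idx l) (fun h => hne (hidxinj h)) e he (hkl' ▸ he)
  refine ⟨v, Set.range (fun k => ES (idx k)), Set.infinite_range_of_injective hESinj, ?_, ?_, ?_⟩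
  · rintro C₁ ⟨k, rfl⟩ C₂ ⟨l, rfl⟩ hne
    have hkl : idx k ≠ idx l := by
      intro h
      exact hne (by simp only [h])
    exact Set.disjoint_left.mpr (fun e he₁ he₂ => hdis _ _ hkl e he₁ he₂)
  · rintro C ⟨k, rfl⟩
    refine ⟨⟨(seq (idx k)).1.1, (seq (idx k)).1.2, (seq (idx k)).2.1, rfl⟩, ?_, ?_⟩
    · obtain ⟨e, heX, he⟩ := (seq (idx k)).2.2.1
      exact ⟨e, he, heX⟩
    · obtain ⟨e, heY, he⟩ := (seq (idx k)).2.2.2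
      exact ⟨e, he, heY⟩
  · rintro C₁ ⟨k, rfl⟩ C₂ ⟨l, rfl⟩ hne w ⟨hw₁, hw₂⟩
    have hkl : k ≠ l := by
      rintro rfl
      exact hne rfl
    exact hidxT k l hkl w (hverts _ _ hw₁) (hverts _ _ hw₂)
end

section
/- Let G be a 2-connected finitely separable graph, let X be a set of edges of G and Y := E(G) ∖ X with V[X] ∩ V[Y] finite, and let K and K' be two distinct connected components of the subgraph (V[X], X). Let G' be the graph obtained from G by adding a new edge f joining a vertex of K to a vertex of K', let M be a matroid on E(G) whose circuits are exactly the edge sets of cycles of G, and let M' be a matroid on E(G') whose circuits are exactly the edge sets of cycles of G'. Then κ_{M'}(X ∪ {f}) = κ_M(X) + 1. -/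
open scoped Matroid

variable {V : Type*} {α : Type*}

/-! ### Auxiliary matroid lemmas: the nullity function `nu` -/

section AuxMatroid

open Set

namespace Matroid

variable {M : Matroid α}

lemma basis_diff_encard_eq {D₁ D₂ S : Set α} (h₁ : M.IsBasis D₁ S) (h₂ : M.IsBasis D₂ S) :
    (S \ D₁).encard = (S \ D₂).encard := by
  have hS := h₁.subset_ground
  have hcomm : (D₂ \ D₁).encard = (D₁ \ D₂).encard := by
    have b₁ : (M ↾ S).IsBase D₁ := (isBase_restrict_iff hS).2 h₁
    have b₂ : (M ↾ S).IsBase D₂ := (isBase_restrict_iff hS).2 h₂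
    exact b₂.encard_diff_comm b₁
  have e₁ : S \ D₁ = (S \ (D₁ ∪ D₂)) ∪ (D₂ \ D₁) := by
    ext x
    constructor
    · rintro ⟨hxS, hx1⟩
      by_cases hx2 : x ∈ D₂
      · exact Or.inr ⟨hx2, hx1⟩
      · exact Or.inl ⟨hxS, by simp [hx1, hx2]⟩
    · rintro (⟨hxS, hx⟩ | ⟨hx2, hx1⟩)
      · exact ⟨hxS, fun h => hx (Or.inl h)⟩
      · exact ⟨h₂.subset hx2, hx1⟩
  have e₂ : S \ D₂ = (S \ (D₁ ∪ D₂)) ∪ (D₁ \ D₂) := by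
    ext x
    constructor
    · rintro ⟨hxS, hx2⟩
      by_cases hx1 : x ∈ D₁
      · exact Or.inr ⟨hx1, hx2⟩
      · exact Or.inl ⟨hxS, by simp [hx1, hx2]⟩
    · rintro (⟨hxS, hx⟩ | ⟨hx1, hx2⟩)
      · exact ⟨hxS, fun h => hx (Or.inr h)⟩
      · exact ⟨h₁.subset hx1, hx2⟩
  rw [e₁, e₂, encard_union_eq, encard_union_eq, hcomm]
  · exact disjoint_left.2 fun x hx hx' => hx.2 (Or.inl hx'.1)
  · exact disjoint_left.2 fun x hx hx' => hx.2 (Or.inr hx'.1)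

/-- The nullity of a set `S`: the number of elements outside a basis of `S`. -/
noncomputable def nu (M : Matroid α) (S : Set α) : ℕ∞ :=
  (S \ (M ↾ S).exists_isBase.choose).encard

lemma IsBasis.nu_eq {D S : Set α} (hD : M.IsBasis D S) : M.nu S = (S \ D).encard := by
  have hS := hD.subset_ground
  have hB := (M ↾ S).exists_isBase.choose_spec
  exact basis_diff_encard_eq ((isBase_restrict_iff hS).1 hB) hD

lemma Indep.nu_eq_zero {I : Set α} (hI : M.Indep I) : M.nu I = 0 := by
  rw [hI.isBasis_self.nu_eq, diff_self, encard_empty]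

lemma nu_mono {S T : Set α} (hST : S ⊆ T) (hT : T ⊆ M.E) : M.nu S ≤ M.nu T := by
  obtain ⟨D, hD⟩ := M.exists_isBasis S (hST.trans hT)
  obtain ⟨D', hD', hDD'⟩ := hD.indep.subset_isBasis_of_subset (hD.subset.trans hST) hT
  rw [hD.nu_eq, hD'.nu_eq]
  have hDS : D' ∩ S = D :=
    (hD.eq_of_subset_indep (hD'.indep.subset inter_subset_left)
      (subset_inter hDD' hD.subset) inter_subset_right).symm
  refine Set.encard_le_encard fun x hx => ⟨hST hx.1, fun hxD' => hx.2 ?_⟩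
  rw [← hDS]; exact ⟨hxD', hx.1⟩

lemma nu_insert_of_mem_closure {S : Set α} {j : α} (hS : S ⊆ M.E) (hj : j ∈ M.closure S)
    (hjS : j ∉ S) : M.nu (insert j S) = M.nu S + 1 := by
  obtain ⟨D, hD⟩ := M.exists_isBasis S hS
  have hjD : j ∉ D := fun h => hjS (hD.subset h)
  have hDins : M.IsBasis D (insert j S) :=
    hD.indep.isBasis_of_subset_of_subset_closure (hD.subset.trans (subset_insert _ _))
      (insert_subset (by rwa [hD.closure_eq_closure]) hD.subset_closure)
  rw [hDins.nu_eq, hD.nu_eq, insert_diff_of_notMem _ hjD,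
    encard_insert_of_notMem (fun h => hjS h.1)]

lemma nu_insert_of_not_mem_closure {S : Set α} {j : α} (hS : S ⊆ M.E) (hjE : j ∈ M.E)
    (hj : j ∉ M.closure S) : M.nu (insert j S) = M.nu S := by
  have hjS : j ∉ S := fun h => hj (M.subset_closure S hS h)
  obtain ⟨D, hD⟩ := M.exists_isBasis S hS
  have hjD : j ∉ D := fun h => hjS (hD.subset h)
  have hind : M.Indep (insert j D) := by
    by_contra hni
    have hdep : M.Dep (insert j D) :=
      ⟨hni, insert_subset hjE (hD.indep.subset_ground)⟩
    have : j ∈ M.closure D := hD.indep.mem_closure_iff.2 (Or.inl hdep)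
    rw [hD.closure_eq_closure] at this
    exact hj this
  have hbasis : M.IsBasis (insert j D) (insert j S) := by
    refine hind.isBasis_of_subset_of_subset_closure (insert_subset_insert hD.subset) ?_
    refine insert_subset (M.subset_closure _ hind.subset_ground (mem_insert _ _)) ?_
    exact hD.subset_closure.trans (M.closure_subset_closure (subset_insert _ _))
  rw [hbasis.nu_eq, hD.nu_eq]
  congr 1
  ext x
  simp only [mem_diff, mem_insert_iff]
  constructor
  · rintro ⟨hx1 | hx1, hx2⟩
    · exact absurd (Or.inl hx1) hx2
    · exact ⟨hx1, fun h => hx2 (Or.inr h)⟩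
  · rintro ⟨hx1, hx2⟩
    exact ⟨Or.inr hx1, by rintro (rfl | h) <;> [exact hjS hx1; exact hx2 h]⟩

lemma nu_union_eq_of_closure_eq_of_finite {B₁ B₂ J : Set α} (hJfin : J.Finite)
    (hB₁ : M.Indep B₁) (hB₂ : M.Indep B₂) (hcl : M.closure B₁ = M.closure B₂)
    (hJE : J ⊆ M.E) (hJ₁ : Disjoint J B₁) (hJ₂ : Disjoint J B₂) :
    M.nu (B₁ ∪ J) = M.nu (B₂ ∪ J) := by
  refine Set.Finite.induction_on (motive := fun J _ => J ⊆ M.E → Disjoint J B₁ → Disjoint J B₂ →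
      M.nu (B₁ ∪ J) = M.nu (B₂ ∪ J)) J hJfin (fun _ _ _ => ?_) ?_ hJE hJ₁ hJ₂
  · rw [union_empty, union_empty, hB₁.nu_eq_zero, hB₂.nu_eq_zero]
  · intro a J₀ haJ₀ hJ₀fin ih hJE hJ₁ hJ₂
    have hJ₀E : J₀ ⊆ M.E := (subset_insert _ _).trans hJE
    have haE : a ∈ M.E := hJE (mem_insert _ _)
    have h₁ : Disjoint J₀ B₁ := hJ₁.mono_left (subset_insert _ _)
    have h₂ : Disjoint J₀ B₂ := hJ₂.mono_left (subset_insert _ _)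
    have ha₁ : a ∉ B₁ ∪ J₀ := by
      rintro (h | h)
      · exact (disjoint_left.1 hJ₁) (mem_insert _ _) h
      · exact haJ₀ h
    have ha₂ : a ∉ B₂ ∪ J₀ := by
      rintro (h | h)
      · exact (disjoint_left.1 hJ₂) (mem_insert _ _) h
      · exact haJ₀ h
    have hclJ : M.closure (B₁ ∪ J₀) = M.closure (B₂ ∪ J₀) := by
      calc M.closure (B₁ ∪ J₀) = M.closure (M.closure B₁ ∪ J₀) :=
            (M.closure_union_closure_left_eq _ _).symm
        _ = M.closure (M.closure B₂ ∪ J₀) := by rw [hcl]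
        _ = M.closure (B₂ ∪ J₀) := M.closure_union_closure_left_eq _ _
    have hground₁ : B₁ ∪ J₀ ⊆ M.E := union_subset hB₁.subset_ground hJ₀E
    have hground₂ : B₂ ∪ J₀ ⊆ M.E := union_subset hB₂.subset_ground hJ₀E
    have hrw₁ : B₁ ∪ insert a J₀ = insert a (B₁ ∪ J₀) := by rw [union_insert]
    have hrw₂ : B₂ ∪ insert a J₀ = insert a (B₂ ∪ J₀) := by rw [union_insert]
    rw [hrw₁, hrw₂]
    by_cases hacl : a ∈ M.closure (B₁ ∪ J₀)
    · rw [nu_insert_of_mem_closure hground₁ hacl ha₁,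
        nu_insert_of_mem_closure hground₂ (hclJ ▸ hacl) ha₂, ih hJ₀E h₁ h₂]
    · rw [nu_insert_of_not_mem_closure hground₁ haE hacl,
        nu_insert_of_not_mem_closure hground₂ haE (hclJ ▸ hacl), ih hJ₀E h₁ h₂]

lemma exists_finite_of_le_nu
    (Hfin : ∀ ⦃I : Set α⦄ ⦃e : α⦄, M.Indep I → ¬ M.Indep (insert e I) →
      ∃ I₀ ⊆ I, I₀.Finite ∧ ¬ M.Indep (insert e I₀))
    {B J : Set α} (hB : B ⊆ M.E) (hJ : M.Indep J) (hJB : Disjoint J B)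
    {k : ℕ} (hk : (k : ℕ∞) ≤ M.nu (B ∪ J)) :
    ∃ J₀ ⊆ J, J₀.Finite ∧ (k : ℕ∞) ≤ M.nu (B ∪ J₀) := by
  have hBJ : B ∪ J ⊆ M.E := union_subset hB hJ.subset_ground
  obtain ⟨D, hD, hJD⟩ := hJ.subset_isBasis_of_subset subset_union_right hBJ
  rw [hD.nu_eq] at hk
  obtain ⟨T, hTsub, hTcard⟩ := Set.exists_subset_encard_eq hk
  have hTfin : T.Finite := finite_of_encard_eq_coe hTcard
  have hTB : T ⊆ B := by
    intro x hx
    rcases (hTsub hx).1 with h | h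
    · exact h
    · exact absurd (hJD h) (hTsub hx).2
  have hdep : ∀ x ∈ T, ∃ S₀ ⊆ D, S₀.Finite ∧ ¬ M.Indep (insert x S₀) := by
    intro x hx
    refine Hfin hD.indep ?_
    have hxcl : x ∈ M.closure D := hD.subset_closure (hTsub hx).1
    rcases hD.indep.mem_closure_iff.1 hxcl with h | h
    · exact h.1
    · exact absurd h (hTsub hx).2
  choose! Sx hSxD hSxfin hSxdep using hdep
  classical
  set U : Set α := ⋃ x ∈ T, Sx x with hU
  have hUfin : U.Finite := hTfin.biUnion fun x hx => hSxfin x hx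
  set J₀ : Set α := U ∩ J with hJ₀
  have hJ₀J : J₀ ⊆ J := inter_subset_right
  set W : Set α := (B \ T) ∪ J₀ with hWdef
  have hWE : W ⊆ M.E := union_subset (diff_subset.trans hB) (hJ₀J.trans hJ.subset_ground)
  obtain ⟨D₁, hD₁⟩ := M.exists_isBasis W hWE
  have hTD : Disjoint T D := disjoint_left.2 fun x hx hxD => (hTsub hx).2 hxD
  have hSxW : ∀ x ∈ T, Sx x ⊆ W := by
    intro x hx y hy
    have hyD : y ∈ D := hSxD x hx hy
    rcases hD.subset hyD with h | h
    · exact Or.inl ⟨h, fun hyT => (disjoint_left.1 hTD) hyT hyD⟩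
    · refine Or.inr ⟨?_, h⟩
      simp only [hU, mem_iUnion]
      exact ⟨x, hx, hy⟩
  have hTcl : T ⊆ M.closure D₁ := by
    intro x hx
    have hSind : M.Indep (Sx x) := hD.indep.subset (hSxD x hx)
    have hxE : x ∈ M.E := hB (hTB hx)
    have hxdep : M.Dep (insert x (Sx x)) :=
      ⟨hSxdep x hx, insert_subset hxE (hSind.subset_ground)⟩
    have hxcl : x ∈ M.closure (Sx x) := hSind.mem_closure_iff.2 (Or.inl hxdep)
    have hsub : M.closure (Sx x) ⊆ M.closure W := M.closure_subset_closure (hSxW x hx)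
    rw [← hD₁.closure_eq_closure] at hsub
    exact hsub hxcl
  have hWBJ₀ : W ⊆ B ∪ J₀ := union_subset_union diff_subset Subset.rfl
  have hBJ₀W : B ∪ J₀ ⊆ W ∪ T := by
    rintro y (hy | hy)
    · by_cases hyT : y ∈ T
      · exact Or.inr hyT
      · exact Or.inl (Or.inl ⟨hy, hyT⟩)
    · exact Or.inl (Or.inr hy)
  have hD₁basis : M.IsBasis D₁ (B ∪ J₀) := by
    refine hD₁.indep.isBasis_of_subset_of_subset_closure (hD₁.subset.trans hWBJ₀) ?_
    refine hBJ₀W.trans (union_subset ?_ hTcl)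
    rw [hD₁.closure_eq_closure]
    exact M.subset_closure W hWE
  refine ⟨J₀, hJ₀J, hUfin.inter_of_left _, ?_⟩
  rw [hD₁basis.nu_eq, ← hTcard]
  refine Set.encard_le_encard fun x hx => ⟨Or.inl (hTB hx), fun hxD₁ => ?_⟩
  rcases hD₁.subset hxD₁ with h | h
  · exact h.2 hx
  · exact (disjoint_left.1 hJB) (hJ₀J h) (hTB hx)

lemma enat_le_of_forall_nat_le {x y : ℕ∞} (h : ∀ k : ℕ, (k : ℕ∞) ≤ x → (k : ℕ∞) ≤ y) :
    x ≤ y := by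
  cases y with
  | top => exact le_top
  | coe m =>
    by_contra hxy
    push_neg at hxy
    have h1 : ((m + 1 : ℕ) : ℕ∞) ≤ x := by
      exact_mod_cast Order.add_one_le_of_lt hxy
    have := h (m + 1) h1
    exact absurd this (by exact_mod_cast Nat.not_succ_le_self m)

lemma nu_union_eq_of_closure_eq
    (Hfin : ∀ ⦃I : Set α⦄ ⦃e : α⦄, M.Indep I → ¬ M.Indep (insert e I) →
      ∃ I₀ ⊆ I, I₀.Finite ∧ ¬ M.Indep (insert e I₀))
    {B₁ B₂ J : Set α} (hB₁ : M.Indep B₁) (hB₂ : M.Indep B₂) (hJ : M.Indep J)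
    (hcl : M.closure B₁ = M.closure B₂) (hJ₁ : Disjoint J B₁) (hJ₂ : Disjoint J B₂) :
    M.nu (B₁ ∪ J) = M.nu (B₂ ∪ J) := by
  have key : ∀ (C₁ C₂ : Set α), M.Indep C₁ → M.Indep C₂ → M.closure C₁ = M.closure C₂ →
      Disjoint J C₁ → Disjoint J C₂ → M.nu (C₁ ∪ J) ≤ M.nu (C₂ ∪ J) := by
    intro C₁ C₂ hC₁ hC₂ hclC hJC₁ hJC₂
    refine enat_le_of_forall_nat_le fun k hk => ?_
    obtain ⟨J₀, hJ₀J, hJ₀fin, hk₀⟩ :=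
      exists_finite_of_le_nu Hfin hC₁.subset_ground hJ hJC₁ hk
    have heq : M.nu (C₁ ∪ J₀) = M.nu (C₂ ∪ J₀) :=
      nu_union_eq_of_closure_eq_of_finite hJ₀fin hC₁ hC₂ hclC
        (hJ₀J.trans hJ.subset_ground) (hJC₁.mono_left hJ₀J) (hJC₂.mono_left hJ₀J)
    calc (k : ℕ∞) ≤ M.nu (C₁ ∪ J₀) := hk₀
      _ = M.nu (C₂ ∪ J₀) := heq
      _ ≤ M.nu (C₂ ∪ J) := nu_mono (union_subset_union Subset.rfl hJ₀J)
          (union_subset hC₂.subset_ground hJ.subset_ground)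
  exact le_antisymm (key B₁ B₂ hB₁ hB₂ hcl hJ₁ hJ₂) (key B₂ B₁ hB₂ hB₁ hcl.symm hJ₂ hJ₁)

/-- Well-definedness of the connectivity function `κ`: any two connectivity witnesses for the
same set `X` have the same size (for matroids whose dependence has finite character). -/
lemma connWitness_encard_eq
    (Hfin : ∀ ⦃I : Set α⦄ ⦃e : α⦄, M.Indep I → ¬ M.Indep (insert e I) →
      ∃ I₀ ⊆ I, I₀.Finite ∧ ¬ M.Indep (insert e I₀))
    {X F₁ F₂ : Set α} (hXE : X ⊆ M.E)
    (h₁ : ConnWitness M X F₁) (h₂ : ConnWitness M X F₂) : F₁.encard = F₂.encard := by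
  obtain ⟨B, B', hB, hB', hF₁sub, hD₁⟩ := h₁
  obtain ⟨C, C', hC, hC', hF₂sub, hD₂⟩ := h₂
  have hBX : M.IsBasis B X := (isBase_restrict_iff hXE).1 hB
  have hCX : M.IsBasis C X := (isBase_restrict_iff hXE).1 hC
  have hB'Y : M.IsBasis B' (M.E \ X) := (isBase_restrict_iff diff_subset).1 hB'
  have hC'Y : M.IsBasis C' (M.E \ X) := (isBase_restrict_iff diff_subset).1 hC'
  have hdisj : ∀ {I I' : Set α}, I ⊆ M.E \ X → I' ⊆ X → Disjoint I I' := by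
    intro I I' hI hI'
    exact disjoint_left.2 fun x hx hx' => (hI hx).2 (hI' hx')
  have hwit : ∀ {I I' F : Set α}, M.IsBasis I X → M.IsBasis I' (M.E \ X) → F ⊆ I ∪ I' →
      M.IsBase ((I ∪ I') \ F) → F.encard = M.nu (I ∪ I') := by
    intro I I' F hI hI' hFsub hbase
    have hSE : I ∪ I' ⊆ M.E := union_subset (hI.subset.trans hXE) (hI'.subset.trans diff_subset)
    have hDbasis : M.IsBasis ((I ∪ I') \ F) (I ∪ I') := by
      refine hbase.indep.isBasis_of_subset_of_subset_closure diff_subset ?_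
      rw [hbase.closure_eq]
      exact hSE
    rw [hDbasis.nu_eq, diff_diff_cancel_left hFsub]
  rw [hwit hBX hB'Y hF₁sub hD₁, hwit hCX hC'Y hF₂sub hD₂]
  have step1 : M.nu (B ∪ B') = M.nu (C ∪ B') :=
    nu_union_eq_of_closure_eq Hfin hBX.indep hCX.indep hB'Y.indep
      (by rw [hBX.closure_eq_closure, hCX.closure_eq_closure])
      (hdisj hB'Y.subset hBX.subset) (hdisj hB'Y.subset hCX.subset)
  have step2 : M.nu (B' ∪ C) = M.nu (C' ∪ C) :=
    nu_union_eq_of_closure_eq Hfin hB'Y.indep hC'Y.indep hCX.indep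
      (by rw [hB'Y.closure_eq_closure, hC'Y.closure_eq_closure])
      (hdisj hB'Y.subset hCX.subset).symm (hdisj hC'Y.subset hCX.subset).symm
  rw [step1, union_comm C B', step2, union_comm C' C]

end Matroid

end AuxMatroid

/-! ### Auxiliary graph lemmas -/

section AuxGraph

open Set SimpleGraph

lemma cycleEdgeSet_mono {G₀ G₁ : SimpleGraph V} (h : G₀ ≤ G₁) {C : Set (Sym2 V)}
    (hC : IsCycleEdgeSet G₀ C) : IsCycleEdgeSet G₁ C := by
  obtain ⟨x, w, hw, rfl⟩ := hC
  exact ⟨x, w.transfer G₁ (fun e he => edgeSet_mono h (w.edges_subset_edgeSet he)), hw.transfer _,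
    by rw [Walk.edges_transfer]⟩

lemma cycleEdgeSet_down {G₀ G₁ : SimpleGraph V} {C : Set (Sym2 V)}
    (hC : IsCycleEdgeSet G₁ C) (hsub : C ⊆ G₀.edgeSet) : IsCycleEdgeSet G₀ C := by
  obtain ⟨x, w, hw, rfl⟩ := hC
  exact ⟨x, w.transfer G₀ (fun e he => hsub he), hw.transfer _, by rw [Walk.edges_transfer]⟩

lemma cycleEdgeSet_finite {G₀ : SimpleGraph V} {C : Set (Sym2 V)}
    (hC : IsCycleEdgeSet G₀ C) : C.Finite := by
  obtain ⟨x, w, hw, rfl⟩ := hC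
  exact w.edges.finite_toSet

/-- If a cycle contains the edge `s(u,v)` and the rest of its edges lie in `Z`, then `u` and
`v` are connected in `fromEdgeSet Z`. -/
lemma reachable_of_cycleEdgeSet {G₀ : SimpleGraph V} {C : Set (Sym2 V)} {u v : V}
    {Z : Set (Sym2 V)} (hC : IsCycleEdgeSet G₀ C) (he : s(u, v) ∈ C)
    (hsub : C \ {s(u, v)} ⊆ Z) : (SimpleGraph.fromEdgeSet Z).Reachable u v := by
  obtain ⟨x, w, hw, rfl⟩ := hC
  set H := SimpleGraph.fromEdgeSet {e | e ∈ w.edges} with hH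
  have hsubH : ∀ e ∈ w.edges, e ∈ H.edgeSet := by
    intro e hew
    rw [hH, edgeSet_fromEdgeSet]
    exact ⟨hew, G₀.not_isDiag_of_mem_edgeSet (w.edges_subset_edgeSet hew)⟩
  have hkey := adj_and_reachable_delete_edges_iff_exists_cycle.mpr
    ⟨x, w.transfer H hsubH, hw.transfer _, by rw [Walk.edges_transfer]; exact he⟩
  refine hkey.2.mono ?_
  intro u' v' hadj
  rw [deleteEdges_adj] at hadj
  obtain ⟨hadjH, hnadj⟩ := hadj
  rw [hH, fromEdgeSet_adj] at hadjH
  have hnadj : s(u', v') ∈ ({s(u, v)} : Set (Sym2 V)) → u' = v' := fun hm => absurd hm hnadj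
  rw [fromEdgeSet_adj]
  exact ⟨hsub ⟨hadjH.1, fun hmem => hadjH.2 (hnadj hmem)⟩, hadjH.2⟩

end AuxGraph

/-- Let `G` be a 2-connected finitely separable graph, `X ⊆ E(G)`,
`Y = E(G) \ X` with `V[X] ∩ V[Y]` finite, and let `K ≠ K'` be two components of `(V[X], X)`.
Let `G'` be obtained from `G` by adding a new edge `f = s(a,b)` joining a vertex `a` of `K`
to a vertex `b` of `K'`. If `M` is the finite-cycle matroid of `G` and `M'` that of `G'`,
then `κ_{M'}(X ∪ {f}) = κ_M(X) + 1`. -/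
theorem kappa_addEdge {V : Type*} (G : SimpleGraph V) (h2 : TwoConnected G)
    (hfs : FinitelySeparable G) (X Y : Set (Sym2 V)) (hX : X ⊆ G.edgeSet)
    (hY : Y = G.edgeSet \ X) (hfin : (vertsOf X ∩ vertsOf Y).Finite)
    (K K' : Set V) (hK : K ∈ components X) (hK' : K' ∈ components X) (hKK' : K ≠ K')
    (a b : V) (ha : a ∈ K) (hb : b ∈ K') (hnew : s(a, b) ∉ G.edgeSet)
    (G' : SimpleGraph V) (hG' : G' = G ⊔ SimpleGraph.fromEdgeSet {s(a, b)})
    (M M' : Matroid (Sym2 V)) (hM : IsFiniteCycleMatroid G M)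
    (hM' : IsFiniteCycleMatroid G' M') :
    ∀ F' F, ConnWitness M' (X ∪ {s(a, b)}) F' → ConnWitness M X F →
      F'.encard = F.encard + 1 := by
  classical
  open Set SimpleGraph Matroid in
  intro F' F hw' hw
  set f : Sym2 V := s(a, b) with hf
  -- component facts
  obtain ⟨v₀, hv₀, hKeq⟩ := hK
  obtain ⟨v₁, hv₁, hK'eq⟩ := hK'
  subst hKeq hK'eq
  have hra : (SimpleGraph.fromEdgeSet X).Reachable v₀ a := ha
  have hrb : (SimpleGraph.fromEdgeSet X).Reachable v₁ b := hb
  have hnr : ¬ (SimpleGraph.fromEdgeSet X).Reachable a b := by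
    intro h
    apply hKK'
    have hv01 : (SimpleGraph.fromEdgeSet X).Reachable v₀ v₁ := (hra.trans h).trans hrb.symm
    ext w
    simp only [Set.mem_setOf_eq]
    exact ⟨fun hw => hv01.symm.trans hw, fun hw => hv01.trans hw⟩
  have hab : a ≠ b := by
    rintro rfl
    exact hnr (SimpleGraph.Reachable.refl a)
  -- edge set facts
  have hG'le : G ≤ G' := by rw [hG']; exact le_sup_left
  have hfE' : G'.edgeSet = insert f G.edgeSet := by
    rw [hG', SimpleGraph.edgeSet_sup, SimpleGraph.edgeSet_fromEdgeSet]
    ext e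
    simp only [Set.mem_union, Set.mem_diff, Set.mem_singleton_iff, Set.mem_setOf_eq,
      Set.mem_insert_iff]
    constructor
    · rintro (h | ⟨rfl, -⟩)
      · exact Or.inr h
      · exact Or.inl rfl
    · rintro (rfl | h)
      · exact Or.inr ⟨rfl, by rw [hf, Sym2.mem_diagSet, Sym2.mk_isDiag_iff]; exact hab⟩
      · exact Or.inl h
  have hME : M.E = G.edgeSet := hM.1
  have hM'E : M'.E = insert f G.edgeSet := by rw [hM'.1, hfE']
  have hfnotE : f ∉ G.edgeSet := hnew
  have hfX : f ∉ X := fun h => hfnotE (hX h)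
  have hXE : X ⊆ M.E := by rw [hME]; exact hX
  -- independence transfer
  have hindep_iff : ∀ I : Set (Sym2 V), I ⊆ G.edgeSet → (M'.Indep I ↔ M.Indep I) := by
    intro I hIE
    rw [hM.2, hM'.2]
    constructor
    · rintro ⟨-, hcyc⟩
      exact ⟨hIE, fun C hC => hcyc C (cycleEdgeSet_mono hG'le hC)⟩
    · rintro ⟨-, hcyc⟩
      refine ⟨hIE.trans (SimpleGraph.edgeSet_mono hG'le), fun C hC hCI => ?_⟩
      exact hcyc C (cycleEdgeSet_down hC (hCI.trans hIE)) hCI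
  -- no cycle through f inside X ∪ {f}
  have hcycf : ∀ C, IsCycleEdgeSet G' C → f ∈ C → C ⊆ insert f X → False := by
    intro C hC hfC hCsub
    refine hnr (reachable_of_cycleEdgeSet hC hfC ?_)
    intro e he
    rcases hCsub he.1 with rfl | h
    · exact absurd rfl he.2
    · exact h
  -- adding f to an independent subset of X
  have hfindep : ∀ I : Set (Sym2 V), I ⊆ X → (M'.Indep (insert f I) ↔ M.Indep I) := by
    intro I hIX
    constructor
    · intro h
      exact (hindep_iff I (hIX.trans hX)).1 (h.subset (Set.subset_insert _ _))
    · intro h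
      rw [hM'.2]
      refine ⟨?_, fun C hC hCsub => ?_⟩
      · rw [hfE']
        exact Set.insert_subset_insert (hIX.trans hX)
      · by_cases hfC : f ∈ C
        · exact hcycf C hC hfC (hCsub.trans (Set.insert_subset_insert hIX))
        · have hCI : C ⊆ I := by
            intro e he
            rcases hCsub he with rfl | h'
            · exact absurd he hfC
            · exact h'
          rw [hM.2] at h
          exact h.2 C (cycleEdgeSet_down hC (hCI.trans (hIX.trans hX))) hCI
  -- finite character of dependence in M
  have HfinM : ∀ ⦃I : Set (Sym2 V)⦄ ⦃e : Sym2 V⦄, M.Indep I → ¬ M.Indep (insert e I) →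
      ∃ I₀ ⊆ I, I₀.Finite ∧ ¬ M.Indep (insert e I₀) := by
    intro I e hI hni
    by_cases he : e ∈ G.edgeSet
    · rw [hM.2] at hni
      push_neg at hni
      have hIE : I ⊆ G.edgeSet := ((hM.2 I).1 hI).1
      obtain ⟨C, hC, hCsub⟩ := hni (Set.insert_subset he hIE)
      refine ⟨C ∩ I, Set.inter_subset_right, (cycleEdgeSet_finite hC).inter_of_left _, ?_⟩
      rw [hM.2]
      rintro ⟨-, hall⟩
      refine hall C hC ?_
      intro x hx
      rcases hCsub hx with h | h
      · exact Or.inl h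
      · exact Or.inr ⟨hx, h⟩
    · refine ⟨∅, Set.empty_subset _, Set.finite_empty, ?_⟩
      rw [hM.2]
      rintro ⟨hsub, -⟩
      exact he (hsub (Set.mem_insert _ _))
  -- bases of M connect what G connects
  have hreach_base : ∀ D : Set (Sym2 V), M.IsBase D → ∀ u w : V, G.Reachable u w →
      (SimpleGraph.fromEdgeSet D).Reachable u w := by
    intro D hD u w huw
    have hDE : D ⊆ G.edgeSet := by rw [← hME]; exact hD.subset_ground
    obtain ⟨p⟩ := huw
    induction p with
    | nil => exact SimpleGraph.Reachable.refl _
    | @cons u' v' w' hadj p ih =>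
      refine SimpleGraph.Reachable.trans ?_ ih
      by_cases hmem : s(u', v') ∈ D
      · exact SimpleGraph.Adj.reachable ((SimpleGraph.fromEdgeSet_adj _).2 ⟨hmem, hadj.ne⟩)
      · have he' : s(u', v') ∈ G.edgeSet := hadj
        have hdep : ¬ M.Indep (insert s(u', v') D) :=
          (hD.insert_dep ⟨by rw [hME]; exact he', hmem⟩).1
        rw [hM.2] at hdep
        push_neg at hdep
        obtain ⟨C, hC, hCsub⟩ := hdep (Set.insert_subset he' hDE)
        have heC : s(u', v') ∈ C := by
          by_contra hne
          have hCD : C ⊆ D := by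
            intro e he
            rcases hCsub he with rfl | h
            · exact absurd he hne
            · exact h
          exact ((hM.2 D).1 hD.indep).2 C hC hCD
        refine reachable_of_cycleEdgeSet hC heC ?_
        intro e he
        rcases hCsub he.1 with rfl | h
        · exact absurd rfl he.2
        · exact h
  -- bases transfer upwards and downwards
  have hbase_up : ∀ D : Set (Sym2 V), M.IsBase D → M'.IsBase D := by
    intro D hD
    have hDE : D ⊆ G.edgeSet := by rw [← hME]; exact hD.subset_ground
    have hDind' : M'.Indep D := (hindep_iff D hDE).2 hD.indep
    refine hDind'.isBase_of_ground_subset_closure ?_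
    intro e heE'
    by_cases heD : e ∈ D
    · exact M'.subset_closure D hDind'.subset_ground heD
    rw [hM'E, Set.mem_insert_iff] at heE'
    rcases heE' with rfl | heE
    · -- e = f
      refine hDind'.mem_closure_iff.2 (Or.inl ⟨?_, Set.insert_subset
        (by rw [hM'E]; exact Set.mem_insert _ _) hDind'.subset_ground⟩)
      intro hIf
      have hrab : (SimpleGraph.fromEdgeSet D).Reachable a b :=
        hreach_base D hD a b (h2.1.preconnected a b)
      obtain ⟨q⟩ := hrab
      have hle : SimpleGraph.fromEdgeSet D ≤ G' := by
        refine le_trans ?_ hG'le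
        rw [← SimpleGraph.fromEdgeSet_edgeSet G]
        exact SimpleGraph.fromEdgeSet_mono hDE
      set p0 : (SimpleGraph.fromEdgeSet D).Walk a b :=
        (q.toPath : (SimpleGraph.fromEdgeSet D).Walk a b) with hp0
      have hp0edges : ∀ e' ∈ p0.edges, e' ∈ D := by
        intro e' he'
        have := p0.edges_subset_edgeSet he'
        rw [SimpleGraph.edgeSet_fromEdgeSet] at this
        exact this.1
      set p1 : G'.Walk a b :=
        p0.transfer G' (fun e' he' => SimpleGraph.edgeSet_mono hle
          (p0.edges_subset_edgeSet he')) with hp1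
      have hp1path : p1.IsPath := q.toPath.2.transfer _
      have hp1edges : ∀ e' ∈ p1.edges, e' ∈ D := by
        intro e' he'
        rw [hp1, SimpleGraph.Walk.edges_transfer] at he'
        exact hp0edges e' he'
      have hadj' : G'.Adj b a := by
        refine SimpleGraph.Adj.symm ?_
        rw [hG', SimpleGraph.sup_adj]
        exact Or.inr ((SimpleGraph.fromEdgeSet_adj _).2 ⟨rfl, hab⟩)
      have hcyc : (SimpleGraph.Walk.cons hadj' p1).IsCycle := by
        rw [SimpleGraph.Walk.cons_isCycle_iff]
        refine ⟨hp1path, fun hmem => ?_⟩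
        have : s(b, a) ∈ D := hp1edges _ hmem
        rw [Sym2.eq_swap] at this
        exact hfnotE (hDE this)
      rw [hM'.2] at hIf
      refine hIf.2 {e' | e' ∈ (SimpleGraph.Walk.cons hadj' p1).edges} ⟨b, _, hcyc, rfl⟩ ?_
      intro e' he'
      simp only [SimpleGraph.Walk.edges_cons, List.mem_cons, Set.mem_setOf_eq] at he'
      rcases he' with rfl | he'
      · rw [← Sym2.eq_swap]
        exact Set.mem_insert _ _
      · exact Set.mem_insert_of_mem _ (hp1edges e' he')
    · have hdep : M.Dep (insert e D) := hD.insert_dep ⟨by rw [hME]; exact heE, heD⟩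
      have hdep' : ¬ M'.Indep (insert e D) :=
        fun h => hdep.1 ((hindep_iff _ (Set.insert_subset heE hDE)).1 h)
      exact hDind'.mem_closure_iff.2 (Or.inl ⟨hdep', Set.insert_subset
        (by rw [hM'E]; exact Set.mem_insert_of_mem _ heE) hDind'.subset_ground⟩)
  have hbase_down : ∀ D : Set (Sym2 V), M'.IsBase D → f ∉ D → M.IsBase D := by
    intro D hD hfD
    have hDE : D ⊆ G.edgeSet := by
      intro x hx
      have := hD.subset_ground hx
      rw [hM'E, Set.mem_insert_iff] at this
      rcases this with rfl | h
      · exact absurd hx hfD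
      · exact h
    have hDind : M.Indep D := (hindep_iff D hDE).1 hD.indep
    refine hDind.isBase_of_ground_subset_closure ?_
    intro e heE
    by_cases heD : e ∈ D
    · exact M.subset_closure D hDind.subset_ground heD
    have heEs : e ∈ G.edgeSet := by rw [← hME]; exact heE
    have hdep' : M'.Dep (insert e D) := hD.insert_dep
      ⟨by rw [hM'E]; exact Set.mem_insert_of_mem _ heEs, heD⟩
    have hdep : ¬ M.Indep (insert e D) :=
      fun h => hdep'.1 ((hindep_iff _ (Set.insert_subset heEs hDE)).2 h)
    exact hDind.mem_closure_iff.2 (Or.inl ⟨hdep, Set.insert_subset heE hDind.subset_ground⟩)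
  -- analyse the witness for M'
  obtain ⟨B₁, B₁', hB₁, hB₁', hF'sub, hD'base⟩ := hw'
  have hgr' : X ∪ {f} ⊆ M'.E := by
    rw [hM'E]
    rintro e (he | he)
    · exact Set.mem_insert_of_mem _ (hX he)
    · rw [Set.mem_singleton_iff] at he
      rw [he]
      exact Set.mem_insert _ _
  have hB₁b : M'.IsBasis B₁ (X ∪ {f}) := (Matroid.isBase_restrict_iff hgr').1 hB₁
  have hfB₁ : f ∈ B₁ := by
    by_contra hfb
    have hB₁X : B₁ ⊆ X := by
      intro x hx
      rcases hB₁b.subset hx with h | h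
      · exact h
      · rw [Set.mem_singleton_iff] at h
        exact absurd (h ▸ hx) hfb
    exact hfb (hB₁b.mem_of_insert_indep (Set.mem_union_right _ rfl)
      ((hfindep B₁ hB₁X).2 ((hindep_iff B₁ (hB₁X.trans hX)).1 hB₁b.indep)))
  set B : Set (Sym2 V) := B₁ \ {f} with hBdef
  have hB₁eq : B₁ = insert f B := by
    rw [hBdef, Set.insert_diff_singleton, Set.insert_eq_of_mem hfB₁]
  have hfB : f ∉ B := fun h => h.2 rfl
  have hBX : B ⊆ X := by
    intro x hx
    rcases hB₁b.subset hx.1 with h | h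
    · exact h
    · exact absurd h hx.2
  have hBind : M.Indep B := (hindep_iff B (hBX.trans hX)).1 (hB₁b.indep.subset Set.diff_subset)
  have hBbasis : M.IsBasis B X := by
    refine hBind.isBasis_of_forall_insert hBX ?_
    intro x hx
    refine ⟨?_, Set.insert_subset (hXE hx.1) hBind.subset_ground⟩
    intro hxi
    have h1 : M'.Indep (insert f (insert x B)) :=
      (hfindep _ (Set.insert_subset hx.1 hBX)).2 hxi
    have h2 : insert f (insert x B) = insert x B₁ := by
      rw [Set.insert_comm, ← hB₁eq]
    have h3 : x ∈ B₁ := hB₁b.mem_of_insert_indep (Set.mem_union_left _ hx.1) (h2 ▸ h1)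
    have hxf : x ≠ f := fun h => hfX (h ▸ hx.1)
    exact hx.2 ⟨h3, hxf⟩
  -- the Y-side basis
  have hground_eq : M'.E \ (X ∪ {f}) = M.E \ X := by
    rw [hM'E, hME]
    ext e
    simp only [Set.mem_diff, Set.mem_insert_iff, Set.mem_union, Set.mem_singleton_iff]
    constructor
    · rintro ⟨(rfl | he), hne⟩
      · exact absurd (Or.inr rfl) hne
      · exact ⟨he, fun h => hne (Or.inl h)⟩
    · rintro ⟨he, hne⟩
      refine ⟨Or.inr he, ?_⟩
      rintro (h | rfl)
      · exact hne h
      · exact hfnotE he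
  rw [hground_eq] at hB₁'
  have hYE' : M.E \ X ⊆ M'.E := by
    rw [hM'E, hME]
    exact fun e he => Set.mem_insert_of_mem _ he.1
  have hB₁'b : M'.IsBasis B₁' (M.E \ X) := (Matroid.isBase_restrict_iff hYE').1 hB₁'
  have hB₁'sub : B₁' ⊆ M.E \ X := hB₁'b.subset
  have hB₁'Es : B₁' ⊆ G.edgeSet := by
    intro x hx
    rw [← hME]
    exact (hB₁'sub hx).1
  have hfB₁' : f ∉ B₁' := fun h => hfnotE (hB₁'Es h)
  have hB₁'ind : M.Indep B₁' := (hindep_iff _ hB₁'Es).1 hB₁'b.indep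
  have hB₁'basis : M.IsBasis B₁' (M.E \ X) := by
    refine hB₁'ind.isBasis_of_forall_insert hB₁'sub ?_
    intro e he
    refine ⟨?_, Set.insert_subset he.1.1 hB₁'ind.subset_ground⟩
    intro hi
    have heEs : e ∈ G.edgeSet := by rw [← hME]; exact he.1.1
    exact he.2 (hB₁'b.mem_of_insert_indep he.1
      ((hindep_iff _ (Set.insert_subset heEs hB₁'Es)).2 hi))
  have hrestrB : (M ↾ X).IsBase B := (Matroid.isBase_restrict_iff hXE).2 hBbasis
  have hrestrB' : (M ↾ (M.E \ X)).IsBase B₁' :=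
    (Matroid.isBase_restrict_iff Set.diff_subset).2 hB₁'basis
  -- the union S of the two M-bases
  set S : Set (Sym2 V) := B ∪ B₁' with hSdef
  have hfS : f ∉ S := by
    rintro (h | h)
    · exact hfB h
    · exact hfB₁' h
  have hSE : S ⊆ M.E := Set.union_subset (hBX.trans hXE) (fun x hx => (hB₁'sub hx).1)
  have hSEs : S ⊆ G.edgeSet := by rw [← hME]; exact hSE
  have hB₁union : B₁ ∪ B₁' = insert f S := by
    rw [hB₁eq, hSdef, Set.insert_union]
  have hSspan : M.E ⊆ M.closure S := by
    intro e he
    by_cases heX : e ∈ X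
    · exact M.closure_subset_closure Set.subset_union_left (hBbasis.subset_closure heX)
    · exact M.closure_subset_closure Set.subset_union_right
        (hB₁'basis.subset_closure ⟨he, heX⟩)
  by_cases hfF' : f ∈ F'
  · -- Case 1 : f was deleted
    have hfD' : f ∉ (B₁ ∪ B₁') \ F' := fun h => h.2 hfF'
    have hD'eq : S \ (F' \ {f}) = (B₁ ∪ B₁') \ F' := by
      rw [hB₁union]
      ext x
      simp only [Set.mem_diff, Set.mem_insert_iff, Set.mem_singleton_iff]
      constructor
      · rintro ⟨hxS, hx⟩
        exact ⟨Or.inr hxS, fun hxF => hx ⟨hxF, fun hxf => hfS (hxf ▸ hxS)⟩⟩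
      · rintro ⟨(rfl | hxS), hx⟩
        · exact absurd hfF' hx
        · exact ⟨hxS, fun h => hx h.1⟩
    have hbase₀ : M.IsBase (S \ (F' \ {f})) := by
      rw [hD'eq]
      exact hbase_down _ hD'base hfD'
    have hwit₀ : ConnWitness M X (F' \ {f}) := by
      refine ⟨B, B₁', hrestrB, hrestrB', ?_, hbase₀⟩
      intro x hx
      have hxm := hF'sub hx.1
      rw [hB₁union] at hxm
      rcases hxm with rfl | h
      · exact absurd rfl hx.2
      · exact h
    have hcount : F'.encard = (F' \ {f}).encard + 1 :=
      (Set.encard_diff_singleton_add_one hfF').symm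
    rw [hcount, Matroid.connWitness_encard_eq HfinM hXE hwit₀ hw]
  · -- Case 2 : f survives; exchange it against an element g of F'
    have hF'S : F' ⊆ S := by
      intro x hx
      have hxm := hF'sub hx
      rw [hB₁union] at hxm
      rcases hxm with rfl | h
      · exact absurd hx hfF'
      · exact h
    have hD'f : (B₁ ∪ B₁') \ F' = insert f (S \ F') := by
      rw [hB₁union]
      ext x
      simp only [Set.mem_diff, Set.mem_insert_iff]
      constructor
      · rintro ⟨(rfl | hxS), hx⟩
        · exact Or.inl rfl
        · exact Or.inr ⟨hxS, hx⟩
      · rintro (rfl | ⟨hxS, hx⟩)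
        · exact ⟨Or.inl rfl, hfF'⟩
        · exact ⟨Or.inr hxS, hx⟩
    have hSF'ind : M.Indep (S \ F') := by
      refine (hindep_iff _ (Set.diff_subset.trans hSEs)).1 (hD'base.indep.subset ?_)
      rw [hD'f]
      exact Set.subset_insert _ _
    obtain ⟨D₃, hD₃basis, hsubD₃⟩ := hSF'ind.subset_isBasis_of_subset Set.diff_subset hSE
    have hD₃base : M.IsBase D₃ := by
      refine hD₃basis.indep.isBase_of_ground_subset_closure ?_
      rw [hD₃basis.closure_eq_closure]
      exact hSspan
    have hfD₃ : f ∉ D₃ := fun h => hfS (hD₃basis.subset h)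
    have hfD' : f ∈ (B₁ ∪ B₁') \ F' := by
      rw [hD'f]
      exact Set.mem_insert _ _
    have hdiff1 : ((B₁ ∪ B₁') \ F') \ D₃ = {f} := by
      apply Set.eq_singleton_iff_unique_mem.2
      refine ⟨⟨hfD', hfD₃⟩, ?_⟩
      intro x hx
      by_contra hxf
      have hxm := hx.1
      rw [hD'f] at hxm
      rcases hxm with rfl | h
      · exact hxf rfl
      · exact hx.2 (hsubD₃ h)
    have hdiff2 : (D₃ \ ((B₁ ∪ B₁') \ F')).encard = 1 := by
      rw [(hbase_up D₃ hD₃base).encard_diff_comm hD'base, hdiff1, Set.encard_singleton]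
    obtain ⟨g, hg⟩ := Set.encard_eq_one.1 hdiff2
    have hgmem : g ∈ D₃ \ ((B₁ ∪ B₁') \ F') := by rw [hg]; exact rfl
    have hgD₃ : g ∈ D₃ := hgmem.1
    have hgD' : g ∉ (B₁ ∪ B₁') \ F' := hgmem.2
    have hgS : g ∈ S := hD₃basis.subset hgD₃
    have hgF' : g ∈ F' := by
      by_contra hgF
      refine hgD' ?_
      rw [hD'f]
      exact Set.mem_insert_of_mem _ ⟨hgS, hgF⟩
    have hD₃eq : D₃ = insert g (S \ F') := by
      apply Set.Subset.antisymm
      · intro x hxD₃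
        by_cases hxD' : x ∈ (B₁ ∪ B₁') \ F'
        · have hxf : x ≠ f := fun h => hfD₃ (h ▸ hxD₃)
          rw [hD'f] at hxD'
          rcases hxD' with rfl | h
          · exact absurd rfl hxf
          · exact Set.mem_insert_of_mem _ h
        · have hxg : x ∈ D₃ \ ((B₁ ∪ B₁') \ F') := ⟨hxD₃, hxD'⟩
          rw [hg, Set.mem_singleton_iff] at hxg
          rw [hxg]
          exact Set.mem_insert _ _
      · exact Set.insert_subset hgD₃ hsubD₃
    have hwit₀ : ConnWitness M X (F' \ {g}) := by
      refine ⟨B, B₁', hrestrB, hrestrB', Set.diff_subset.trans hF'S, ?_⟩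
      have hSrw : S \ (F' \ {g}) = insert g (S \ F') := by
        ext x
        simp only [Set.mem_diff, Set.mem_singleton_iff, Set.mem_insert_iff]
        constructor
        · rintro ⟨hxS, hx⟩
          by_cases hxg : x = g
          · exact Or.inl hxg
          · exact Or.inr ⟨hxS, fun hxF => hx ⟨hxF, hxg⟩⟩
        · rintro (rfl | ⟨hxS, hx⟩)
          · exact ⟨hgS, fun h => h.2 rfl⟩
          · exact ⟨hxS, fun h => hx h.1⟩
      rw [hSrw, ← hD₃eq]
      exact hD₃base
    have hcount : F'.encard = (F' \ {g}).encard + 1 :=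
      (Set.encard_diff_singleton_add_one hgF').symm
    rw [hcount, Matroid.connWitness_encard_eq HfinM hXE hwit₀ hw]
end
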